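/- arXiv:2410.19567 — 9 statements merged into one kernel-verified Lean document; each statement's English description precedes it below -/
import Mathlib

section
/- Let G = (S ∪ K, E) be a split graph, where S is an independent set and K is a clique of G, and assume K is a maximum clique, i.e., |K| = ω(G). Then ω(G) ≤ D(G) ≤ ω(G) + 1. -/
variable {V : Type*}

/-- `A` dominates `B` in `G`: every vertex of `B` has a neighbour in `A`. -/
def Dominates (G : SimpleGraph V) (A B : Set V) : Prop :=
  ∀ b ∈ B, ∃ a ∈ A, G.Adj a b

/-- `P` is a partition of the set `W` into `k` (nonempty, pairwise disjoint) parts. -/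
def IsPartitionOn (W : Set V) {k : ℕ} (P : Fin k → Set V) : Prop :=
  (∀ i, (P i).Nonempty) ∧ (Pairwise fun i j => Disjoint (P i) (P j)) ∧ (⋃ i, P i) = W

/-- `P` is an upper domatic partition of `G` (of size `k`). -/
def IsUpperDomaticPart (G : SimpleGraph V) {k : ℕ} (P : Fin k → Set V) : Prop :=
  IsPartitionOn Set.univ P ∧
    ∀ i j : Fin k, i < j → Dominates G (P i) (P j) ∨ Dominates G (P j) (P i)

/-- `P` is a transitive partition of the set `W` (of size `k`), with respect to `G`. -/
def IsTransitivePartOn (G : SimpleGraph V) (W : Set V) {k : ℕ} (P : Fin k → Set V) : Prop :=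
  IsPartitionOn W P ∧ ∀ i j : Fin k, i < j → Dominates G (P i) (P j)

/-- The upper domatic number `D(G)`. -/
noncomputable def upperDomaticNumber (G : SimpleGraph V) : ℕ :=
  sSup {k | ∃ P : Fin k → Set V, IsUpperDomaticPart G P}

/-- The transitivity `Tr(G)`. -/
noncomputable def transitivityNumber (G : SimpleGraph V) : ℕ :=
  sSup {k | ∃ P : Fin k → Set V, IsTransitivePartOn G Set.univ P}

/-- The clique number `ω(G)`. -/
noncomputable def cliqueNumber (G : SimpleGraph V) : ℕ :=
  sSup {n | ∃ s : Finset V, G.IsNClique n s}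

/-- For a split graph `G` with independent set `S` and maximum clique `K`
(`|K| = ω(G)`), we have `ω(G) ≤ D(G) ≤ ω(G) + 1`. -/
theorem split_upperDomatic_bounds [Fintype V] [DecidableEq V] (G : SimpleGraph V)
    (S K : Finset V) (hdisj : Disjoint S K) (hcover : S ∪ K = Finset.univ)
    (hS : ∀ u ∈ S, ∀ w ∈ S, ¬ G.Adj u w)
    (hK : G.IsClique (K : Set V))
    (hmax : K.card = cliqueNumber G) :
    cliqueNumber G ≤ upperDomaticNumber G ∧
      upperDomaticNumber G ≤ cliqueNumber G + 1 := by
  classical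
  have hcoverSet : (↑S ∪ ↑K : Set V) = Set.univ := by
    rw [← Finset.coe_union, hcover, Finset.coe_univ]
  -- Every upper domatic partition has size ≤ K.card + 1
  have hbound : ∀ k ∈ {k | ∃ P : Fin k → Set V, IsUpperDomaticPart G P},
      k ≤ K.card + 1 := by
    rintro k ⟨P, ⟨⟨hne, hdisjP, hcov⟩, hdom⟩⟩
    set T : Finset (Fin k) :=
      Finset.univ.filter (fun i => (P i ∩ (K : Set V)).Nonempty) with hT
    -- a representative in each part, inside K when possible
    set f : Fin k → V := fun i =>
      if h : (P i ∩ (K : Set V)).Nonempty then h.choose else (hne i).choose with hf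
    have hfP : ∀ i, f i ∈ P i := by
      intro i
      by_cases h : (P i ∩ (K : Set V)).Nonempty
      · simp only [hf, dif_pos h]; exact h.choose_spec.1
      · simp only [hf, dif_neg h]; exact (hne i).choose_spec
    have hfK : ∀ i ∈ T, f i ∈ K := by
      intro i hi
      have h : (P i ∩ (K : Set V)).Nonempty := by
        simpa [hT] using hi
      simp only [hf, dif_pos h]
      exact h.choose_spec.2
    have hinj : Set.InjOn f ↑T := by
      intro i _ j _ hij
      by_contra hne'
      have := hdisjP hne'
      exact (Set.disjoint_left.1 this (hfP i)) (hij ▸ hfP j)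
    have hTcard : T.card ≤ K.card :=
      Finset.card_le_card_of_injOn f hfK hinj
    have hTc : Tᶜ.card ≤ 1 := by
      rw [Finset.card_le_one]
      intro i hi j hj
      have hsubS : ∀ a ∈ Tᶜ, P a ⊆ ↑S := by
        intro a ha x hx
        have hnK : ¬ (P a ∩ (K : Set V)).Nonempty := by
          simpa [hT] using ha
        have hxSK : x ∈ (↑S ∪ ↑K : Set V) := hcoverSet ▸ Set.mem_univ x
        rcases hxSK with h | h
        · exact h
        · exact absurd ⟨x, hx, h⟩ hnK
      by_contra hij
      have key : ∀ a b : Fin k, a < b → a ∈ Tᶜ → b ∈ Tᶜ → False := by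
        intro a b hab ha hb
        rcases hdom a b hab with hd | hd
        · obtain ⟨x, hx⟩ := hne b
          obtain ⟨y, hy, hadj⟩ := hd x hx
          exact hS y (hsubS a ha hy) x (hsubS b hb hx) hadj
        · obtain ⟨x, hx⟩ := hne a
          obtain ⟨y, hy, hadj⟩ := hd x hx
          exact hS y (hsubS b hb hy) x (hsubS a ha hx) hadj
      rcases lt_trichotomy i j with h | h | h
      · exact key i j h hi hj
      · exact hij h
      · exact key j i h hj hi
    have : T.card + Tᶜ.card = k := by
      rw [Finset.card_add_card_compl, Fintype.card_fin]
    omega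
  -- The set of achievable sizes is nonempty
  have hDne : {k | ∃ P : Fin k → Set V, IsUpperDomaticPart G P}.Nonempty := by
    rcases isEmpty_or_nonempty V with hV | hV
    · refine ⟨0, fun i => i.elim0, ⟨⟨fun i => i.elim0, fun i => i.elim0, ?_⟩,
        fun i => i.elim0⟩⟩
      simp [Set.univ_eq_empty_iff.2 hV]
    · refine ⟨1, fun _ => Set.univ, ⟨⟨fun _ => Set.univ_nonempty,
        fun i j hij => absurd (Subsingleton.elim i j) hij, Set.iUnion_const _⟩, ?_⟩⟩
      intro i j hij
      exact absurd (Subsingleton.elim i j) hij.ne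
  constructor
  · -- lower bound
    rw [← hmax]
    rcases K.eq_empty_or_nonempty with hKe | hKne
    · simp [hKe]
    · -- construct a partition of size K.card
      have hn : 0 < K.card := Finset.card_pos.2 hKne
      set i0 : Fin K.card := ⟨0, hn⟩ with hi0
      set g : Fin K.card → V := fun i => ((K.equivFin.symm i : V)) with hg
      have hgK : ∀ i, g i ∈ K := fun i => (K.equivFin.symm i).2
      have hginj : Function.Injective g := fun i j hij =>
        K.equivFin.symm.injective (Subtype.coe_injective hij)
      set P : Fin K.card → Set V :=
        fun i => if i = i0 then insert (g i) (↑S) else {g i} with hP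
      have hgP : ∀ i, g i ∈ P i := by
        intro i
        by_cases h : i = i0 <;> simp [hP, h]
      have hmem : K.card ∈ {k | ∃ P : Fin k → Set V, IsUpperDomaticPart G P} := by
        refine ⟨P, ⟨⟨fun i => ⟨g i, hgP i⟩, ?_, ?_⟩, ?_⟩⟩
        · -- pairwise disjoint
          intro i j hij
          rw [Set.disjoint_left]
          intro x hxi hxj
          have hxi' : x = g i ∨ (x ∈ (S : Set V) ∧ i = i0) := by
            by_cases h : i = i0
            · simp only [hP, if_pos h] at hxi
              rcases hxi with h' | h'
              · exact Or.inl h'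
              · exact Or.inr ⟨h', h⟩
            · simp only [hP, if_neg h] at hxi
              exact Or.inl hxi
          have hxj' : x = g j ∨ (x ∈ (S : Set V) ∧ j = i0) := by
            by_cases h : j = i0
            · simp only [hP, if_pos h] at hxj
              rcases hxj with h' | h'
              · exact Or.inl h'
              · exact Or.inr ⟨h', h⟩
            · simp only [hP, if_neg h] at hxj
              exact Or.inl hxj
          rcases hxi' with h1 | ⟨h1, h1'⟩ <;> rcases hxj' with h2 | ⟨h2, h2'⟩
          · exact hij (hginj (h1 ▸ h2 ▸ rfl))
          · exact (Finset.disjoint_left.1 hdisj h2 (h1 ▸ hgK i))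
          · exact (Finset.disjoint_left.1 hdisj h1 (h2 ▸ hgK j))
          · exact hij (h1'.trans h2'.symm)
        · -- union = univ
          apply Set.eq_univ_of_univ_subset
          intro x _
          have hxSK : x ∈ (↑S ∪ ↑K : Set V) := hcoverSet ▸ Set.mem_univ x
          rcases hxSK with h | h
          · exact Set.mem_iUnion.2 ⟨i0, by simp [hP, h]⟩
          · refine Set.mem_iUnion.2 ⟨K.equivFin ⟨x, h⟩, ?_⟩
            have : g (K.equivFin ⟨x, h⟩) = x := by simp [hg]
            have h2 := hgP (K.equivFin ⟨x, h⟩)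
            rw [this] at h2
            exact h2
        · -- domination
          intro i j hij
          left
          intro b hb
          have hj0 : j ≠ i0 := by
            intro h
            rw [h] at hij
            exact absurd hij (by simp [hi0, Fin.lt_def])
          simp only [hP, if_neg hj0, Set.mem_singleton_iff] at hb
          refine ⟨g i, hgP i, ?_⟩
          rw [hb]
          exact hK (hgK i) (hgK j) (fun h => hij.ne (hginj h))
      exact le_csSup ⟨K.card + 1, fun k hk => hbound k hk⟩ hmem
  · -- upper bound
    rw [← hmax]
    exact csSup_le hDne hbound
end

section
/- Let G = (S ∪ K, E) be a split graph, where S is an independent set and K is a clique of G with |K| = ω(G). Then D(G) = Tr(G). -/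
variable {V : Type*}

/-- A vertex of a clique, not in `Y ⊆ K`, dominates `Y`. -/
lemma clique_dominates (G : SimpleGraph V) {K : Set V} (hK : G.IsClique K)
    {X Y : Set V} {c : V} (hcX : c ∈ X) (hcK : c ∈ K) (hYK : Y ⊆ K) (hcY : c ∉ Y) :
    Dominates G X Y :=
  fun b hb => ⟨c, hcX, hK hcK (hYK hb) (fun h => hcY (h ▸ hb))⟩

/-- If the parts of a partition can be ranked so that lower-rank parts dominate
higher-or-equal-rank parts, then sorting by rank gives a transitive partition. -/
lemma sorted_transitive (G : SimpleGraph V) {k : ℕ} (Q : Fin k → Set V) (r : Fin k → ℕ)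
    (hne : ∀ i, (Q i).Nonempty)
    (hdisj : Pairwise fun i j => Disjoint (Q i) (Q j))
    (huniv : (⋃ i, Q i) = Set.univ)
    (hdom : ∀ i j, i ≠ j → r i ≤ r j → Dominates G (Q i) (Q j)) :
    ∃ Q' : Fin k → Set V, IsTransitivePartOn G Set.univ Q' := by
  refine ⟨Q ∘ Tuple.sort r, ⟨fun i => hne _,
    fun i j hij => hdisj ((Tuple.sort r).injective.ne hij), ?_⟩,
    fun i j hij => hdom _ _ ((Tuple.sort r).injective.ne hij.ne)
      (Tuple.monotone_sort r hij.le)⟩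
  rw [← huniv]
  exact Function.Surjective.iUnion_comp (Tuple.sort r).surjective Q

/-- Main lemma: any upper domatic partition of a split graph yields a transitive
partition of the same size. -/
lemma ud_to_tr [Fintype V] [DecidableEq V] (G : SimpleGraph V)
    (S K : Finset V) (hdisj : Disjoint S K) (hcover : S ∪ K = Finset.univ)
    (hS : ∀ u ∈ S, ∀ w ∈ S, ¬ G.Adj u w)
    (hK : G.IsClique (K : Set V))
    {k : ℕ} (P : Fin k → Set V) (hP : IsUpperDomaticPart G P) :
    ∃ Q : Fin k → Set V, IsTransitivePartOn G Set.univ Q := by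
  classical
  obtain ⟨⟨hne, hpd, huniv⟩, hdm⟩ := hP
  have cover : ∀ v : V, v ∈ (S : Set V) ∨ v ∈ (K : Set V) := by
    intro v
    have hv : v ∈ S ∪ K := by rw [hcover]; exact Finset.mem_univ v
    exact_mod_cast Finset.mem_union.mp hv
  have SK : ∀ {x : V}, x ∈ (S : Set V) → x ∈ (K : Set V) → False := by
    intro x hs hk
    exact Finset.disjoint_left.mp hdisj hs hk
  have nbrK : ∀ {x a : V}, a ∈ (S : Set V) → G.Adj x a → x ∈ (K : Set V) := by
    intro x a ha hadj
    rcases cover x with hx | hx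
    · exact absurd hadj (hS x hx a ha)
    · exact hx
  have disjP : ∀ {i j : Fin k} {x : V}, i ≠ j → x ∈ P i → x ∈ P j → False := by
    intro i j x hij hxi hxj
    exact Set.disjoint_left.mp (hpd hij) hxi hxj
  have hdom' : ∀ i j, i ≠ j → Dominates G (P i) (P j) ∨ Dominates G (P j) (P i) := by
    intro i j hij
    rcases hij.lt_or_gt with h | h
    · exact hdm i j h
    · exact (hdm j i h).symm
  have memP : ∀ x : V, ∃ j, x ∈ P j := by
    intro x
    have : x ∈ ⋃ i, P i := by rw [huniv]; trivial
    exact Set.mem_iUnion.mp this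
  by_cases hp : ∃ m, P m ∩ (K : Set V) = ∅
  · obtain ⟨m, hm⟩ := hp
    have AsubS : P m ⊆ (S : Set V) := by
      intro x hx
      rcases cover x with h | h
      · exact h
      · exact ((Set.eq_empty_iff_forall_notMem.mp hm x) ⟨hx, h⟩).elim
    have notpure : ∀ i, i ≠ m → (P i ∩ (K : Set V)).Nonempty := by
      intro i him
      rw [Set.nonempty_iff_ne_empty]
      intro hie
      have isubS : P i ⊆ (S : Set V) := fun x hx => (cover x).resolve_right
        (fun h => (Set.eq_empty_iff_forall_notMem.mp hie x) ⟨hx, h⟩)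
      rcases hdom' i m him with hd | hd
      · obtain ⟨b, hb⟩ := hne m
        obtain ⟨a, ha, hadj⟩ := hd b hb
        exact hS a (isubS ha) b (AsubS hb) hadj
      · obtain ⟨b, hb⟩ := hne i
        obtain ⟨a, ha, hadj⟩ := hd b hb
        exact hS a (AsubS ha) b (isubS hb) hadj
    have Adomi : ∀ j, j ≠ m → (¬ ∀ a ∈ P m, ∃ c ∈ P j ∩ (K : Set V), G.Adj c a) →
        ∀ c ∈ P j ∩ (K : Set V), ∃ a ∈ P m, G.Adj a c := by
      intro j hjm hnF c hc
      rcases hdom' j m hjm with hd | hd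
      · exfalso
        apply hnF
        intro a ha
        obtain ⟨x, hx, hadj⟩ := hd a ha
        exact ⟨x, ⟨hx, nbrK (AsubS ha) hadj⟩, hadj⟩
      · exact hd c hc.1
    by_cases hF : ∃ i₀, i₀ ≠ m ∧ ∀ a ∈ P m, ∃ c ∈ P i₀ ∩ (K : Set V), G.Adj c a
    · obtain ⟨i₀, hi₀m, hi₀d⟩ := hF
      refine sorted_transitive G
        (fun i => if i = i₀ then ((S : Set V) \ P m) ∪ (P i₀ ∩ (K : Set V))
          else if i = m then P m else P i ∩ (K : Set V))
        (fun i => if i = i₀ then 0 else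
          if (i ≠ m ∧ ∀ a ∈ P m, ∃ c ∈ P i ∩ (K : Set V), G.Adj c a) then 1 else
          if i = m then 2 else 3) ?_ ?_ ?_ ?_
      · intro i
        by_cases h1 : i = i₀
        · simp only [if_pos h1]
          exact Set.Nonempty.mono Set.subset_union_right (notpure i₀ hi₀m)
        · simp only [if_neg h1]
          by_cases h2 : i = m
          · simp only [if_pos h2]
            exact h2 ▸ hne m
          · simp only [if_neg h2]
            exact notpure i h2
      · intro i j hij
        rw [Set.disjoint_left]
        intro x hxi hxj
        have hmem : ∀ (l : Fin k), x ∈ (if l = i₀ then ((S : Set V) \ P m) ∪ (P i₀ ∩ (K : Set V))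
            else if l = m then P m else P l ∩ (K : Set V)) →
            (x ∈ P l ∧ x ∈ (K : Set V)) ∨ (l = i₀ ∧ x ∈ (S : Set V) ∧ x ∉ P m) ∨
            (l = m ∧ x ∈ P m) := by
          intro l hx
          by_cases h1 : l = i₀
          · rw [if_pos h1] at hx
            rcases hx with h | h
            · exact Or.inr (Or.inl ⟨h1, h.1, h.2⟩)
            · exact Or.inl ⟨by rw [h1]; exact h.1, h.2⟩
          · rw [if_neg h1] at hx
            by_cases h2 : l = m
            · rw [if_pos h2] at hx
              exact Or.inr (Or.inr ⟨h2, hx⟩)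
            · rw [if_neg h2] at hx
              exact Or.inl hx
        rcases hmem i hxi with hi | hi | hi <;> rcases hmem j hxj with hj | hj | hj
        · exact disjP hij hi.1 hj.1
        · exact SK hj.2.1 hi.2
        · exact disjP hij hi.1 (by rw [hj.1]; exact hj.2)
        · exact SK hi.2.1 hj.2
        · exact hij (hi.1.trans hj.1.symm)
        · exact hi.2.2 (hj.1 ▸ hj.2)
        · exact disjP hij (by rw [hi.1]; exact hi.2) hj.1
        · exact hj.2.2 (hi.1 ▸ hi.2)
        · exact hij (hi.1.trans hj.1.symm)
      · rw [Set.eq_univ_iff_forall]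
        intro x
        rw [Set.mem_iUnion]
        rcases cover x with hx | hx
        · by_cases hxm : x ∈ P m
          · exact ⟨m, by rw [if_neg (Ne.symm hi₀m), if_pos rfl]; exact hxm⟩
          · exact ⟨i₀, by rw [if_pos rfl]; exact Or.inl ⟨hx, hxm⟩⟩
        · obtain ⟨j, hj⟩ := memP x
          have hjm : j ≠ m := fun h => (Set.eq_empty_iff_forall_notMem.mp hm x) ⟨h ▸ hj, hx⟩
          by_cases hji : j = i₀
          · exact ⟨i₀, by rw [if_pos rfl]; exact Or.inr ⟨hji ▸ hj, hx⟩⟩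
          · exact ⟨j, by rw [if_neg hji, if_neg hjm]; exact ⟨hj, hx⟩⟩
      · intro i j hij hr
        by_cases hii : i = i₀
        · have hji₀ : j ≠ i₀ := fun h => hij (hii.trans h.symm)
          rw [if_pos hii, if_neg hji₀]
          by_cases hjm : j = m
          · rw [if_pos hjm]
            intro a ha
            obtain ⟨c, hc, hadj⟩ := hi₀d a (hjm ▸ ha)
            exact ⟨c, Or.inr hc, hadj⟩
          · rw [if_neg hjm]
            obtain ⟨c, hc⟩ := notpure i₀ hi₀m
            exact clique_dominates G hK (Or.inr hc) hc.2 Set.inter_subset_right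
              (fun h => disjP (hii.symm.trans_ne hij) hc.1 h.1)
        · rw [if_neg hii] at hr ⊢
          by_cases hiF : i ≠ m ∧ ∀ a ∈ P m, ∃ c ∈ P i ∩ (K : Set V), G.Adj c a
          · rw [if_pos hiF] at hr
            rw [if_neg hiF.1]
            have hji₀ : j ≠ i₀ := by
              intro h
              rw [if_pos h] at hr
              omega
            rw [if_neg hji₀]
            by_cases hjm : j = m
            · rw [if_pos hjm]
              intro a ha
              obtain ⟨c, hc, hadj⟩ := hiF.2 a (hjm ▸ ha)
              exact ⟨c, hc, hadj⟩
            · rw [if_neg hjm]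
              obtain ⟨c, hc⟩ := notpure i hiF.1
              exact clique_dominates G hK hc hc.2 Set.inter_subset_right
                (fun h => disjP hij hc.1 h.1)
          · rw [if_neg hiF] at hr
            by_cases him : i = m
            · rw [if_pos him] at hr ⊢
              have hji₀ : j ≠ i₀ := by
                intro h
                rw [if_pos h] at hr
                omega
              have hjm : j ≠ m := fun h => hij (him.trans h.symm)
              have hjF : ¬ (j ≠ m ∧ ∀ a ∈ P m, ∃ c ∈ P j ∩ (K : Set V), G.Adj c a) := by
                intro h
                rw [if_neg hji₀, if_pos h] at hr
                omega
              rw [if_neg hji₀, if_neg hjm]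
              intro b hb
              obtain ⟨a, ha, hadj⟩ := Adomi j hjm (fun hd => hjF ⟨hjm, hd⟩) b hb
              exact ⟨a, him ▸ ha, hadj⟩
            · rw [if_neg him] at hr
              have hji₀ : j ≠ i₀ := by
                intro h
                rw [if_pos h] at hr
                omega
              have hjm : j ≠ m := by
                intro h
                rw [if_neg hji₀] at hr
                by_cases hjF : j ≠ m ∧ ∀ a ∈ P m, ∃ c ∈ P j ∩ (K : Set V), G.Adj c a
                · exact hjF.1 h
                · rw [if_neg hjF, if_pos h] at hr
                  omega
              rw [if_neg him, if_neg hji₀, if_neg hjm]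
              obtain ⟨c, hc⟩ := notpure i him
              exact clique_dominates G hK hc hc.2 Set.inter_subset_right
                (fun h => disjP hij hc.1 h.1)
    · -- F empty: put all of S first, then the clique pieces
      refine sorted_transitive G
        (fun i => if i = m then (S : Set V) else P i ∩ (K : Set V))
        (fun i => if i = m then 0 else 1) ?_ ?_ ?_ ?_
      · intro i
        by_cases h1 : i = m
        · simp only [if_pos h1]
          obtain ⟨b, hb⟩ := hne m
          exact ⟨b, AsubS hb⟩
        · simp only [if_neg h1]
          exact notpure i h1
      · intro i j hij
        rw [Set.disjoint_left]
        intro x hxi hxj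
        by_cases h1 : i = m <;> by_cases h2 : j = m
        · exact hij (h1.trans h2.symm)
        · rw [if_pos h1] at hxi
          rw [if_neg h2] at hxj
          exact SK hxi hxj.2
        · rw [if_neg h1] at hxi
          rw [if_pos h2] at hxj
          exact SK hxj hxi.2
        · rw [if_neg h1] at hxi
          rw [if_neg h2] at hxj
          exact disjP hij hxi.1 hxj.1
      · rw [Set.eq_univ_iff_forall]
        intro x
        rw [Set.mem_iUnion]
        rcases cover x with hx | hx
        · exact ⟨m, by rw [if_pos rfl]; exact hx⟩
        · obtain ⟨j, hj⟩ := memP x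
          have hjm : j ≠ m := fun h => (Set.eq_empty_iff_forall_notMem.mp hm x) ⟨h ▸ hj, hx⟩
          exact ⟨j, by rw [if_neg hjm]; exact ⟨hj, hx⟩⟩
      · intro i j hij hr
        by_cases h1 : i = m
        · have hjm : j ≠ m := fun h => hij (h1.trans h.symm)
          rw [if_pos h1, if_neg hjm]
          intro b hb
          obtain ⟨a, ha, hadj⟩ := Adomi j hjm (fun hd => hF ⟨j, hjm, hd⟩) b hb
          exact ⟨a, AsubS ha, hadj⟩
        · rw [if_neg h1] at hr ⊢
          have hjm : j ≠ m := by
            intro h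
            rw [if_pos h] at hr
            omega
          rw [if_neg hjm]
          obtain ⟨c, hc⟩ := notpure i h1
          exact clique_dominates G hK hc hc.2 Set.inter_subset_right
            (fun h => disjP hij hc.1 h.1)
  · -- no pure part: every part meets K
    have hnp : ∀ i, (P i ∩ (K : Set V)).Nonempty :=
      fun i => Set.nonempty_iff_ne_empty.mpr (fun h => hp ⟨i, h⟩)
    rcases Nat.eq_zero_or_pos k with hk | hk
    · subst hk
      exact ⟨P, ⟨hne, hpd, huniv⟩, fun i => i.elim0⟩
    · have i₀ : Fin k := ⟨0, hk⟩
      refine sorted_transitive G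
        (fun i => if i = i₀ then (S : Set V) ∪ (P i ∩ (K : Set V)) else P i ∩ (K : Set V))
        (fun i => if i = i₀ then 0 else 1) ?_ ?_ ?_ ?_
      · intro i
        by_cases h1 : i = i₀
        · simp only [if_pos h1]
          exact Set.Nonempty.mono Set.subset_union_right (hnp i)
        · simp only [if_neg h1]
          exact hnp i
      · intro i j hij
        rw [Set.disjoint_left]
        intro x hxi hxj
        have hmem : ∀ (l : Fin k), x ∈ (if l = i₀ then (S : Set V) ∪ (P l ∩ (K : Set V))
            else P l ∩ (K : Set V)) → (x ∈ P l ∧ x ∈ (K : Set V)) ∨ (l = i₀ ∧ x ∈ (S : Set V)) := by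
          intro l hx
          by_cases h1 : l = i₀
          · rw [if_pos h1] at hx
            rcases hx with h | h
            · exact Or.inr ⟨h1, h⟩
            · exact Or.inl h
          · rw [if_neg h1] at hx
            exact Or.inl hx
        rcases hmem i hxi with hi | hi <;> rcases hmem j hxj with hj | hj
        · exact disjP hij hi.1 hj.1
        · exact SK hj.2 hi.2
        · exact SK hi.2 hj.2
        · exact hij (hi.1.trans hj.1.symm)
      · rw [Set.eq_univ_iff_forall]
        intro x
        rw [Set.mem_iUnion]
        rcases cover x with hx | hx
        · exact ⟨i₀, by rw [if_pos rfl]; exact Or.inl hx⟩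
        · obtain ⟨j, hj⟩ := memP x
          by_cases hji : j = i₀
          · exact ⟨i₀, by rw [if_pos rfl]; exact Or.inr ⟨hji ▸ hj, hx⟩⟩
          · exact ⟨j, by rw [if_neg hji]; exact ⟨hj, hx⟩⟩
      · intro i j hij hr
        by_cases h1 : i = i₀
        · have hji : j ≠ i₀ := fun h => hij (h1.trans h.symm)
          rw [if_pos h1, if_neg hji]
          obtain ⟨c, hc⟩ := hnp i
          exact clique_dominates G hK (Or.inr hc) hc.2 Set.inter_subset_right
            (fun h => disjP hij hc.1 h.1)
        · rw [if_neg h1] at hr ⊢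
          have hji : j ≠ i₀ := by
            intro h
            rw [if_pos h] at hr
            omega
          rw [if_neg hji]
          obtain ⟨c, hc⟩ := hnp i
          exact clique_dominates G hK hc hc.2 Set.inter_subset_right
            (fun h => disjP hij hc.1 h.1)

/-- For a split graph `G` with independent set `S` and maximum clique `K`
(`|K| = ω(G)`), we have `D(G) = Tr(G)`. -/
theorem split_upperDomatic_eq_transitivity [Fintype V] [DecidableEq V] (G : SimpleGraph V)
    (S K : Finset V) (hdisj : Disjoint S K) (hcover : S ∪ K = Finset.univ)
    (hS : ∀ u ∈ S, ∀ w ∈ S, ¬ G.Adj u w)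
    (hK : G.IsClique (K : Set V))
    (hmax : K.card = cliqueNumber G) :
    upperDomaticNumber G = transitivityNumber G := by
  unfold upperDomaticNumber transitivityNumber
  congr 1
  ext k
  simp only [Set.mem_setOf_eq]
  constructor
  · rintro ⟨P, hP⟩
    exact ud_to_tr G S K hdisj hcover hS hK P hP
  · rintro ⟨P, hpart, hdom⟩
    exact ⟨P, hpart, fun i j hij => Or.inl (hdom i j hij)⟩
end

section
/- Let G = (S ∪ K, E) be a split graph, where S is an independent set and K is a clique of G with |K| = ω(G). If there exists a vertex x ∈ K that has no neighbour in S, then D(G) = ω(G). -/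
variable {V : Type*}

/-- For a split graph `G` with independent set `S` and maximum clique `K`
(`|K| = ω(G)`), if some vertex of `K` has no neighbour in `S`, then `D(G) = ω(G)`. -/
theorem split_upperDomatic_eq_omega [Fintype V] [DecidableEq V] (G : SimpleGraph V)
    (S K : Finset V) (hdisj : Disjoint S K) (hcover : S ∪ K = Finset.univ)
    (hS : ∀ u ∈ S, ∀ w ∈ S, ¬ G.Adj u w)
    (hK : G.IsClique (K : Set V))
    (hmax : K.card = cliqueNumber G)
    (hx : ∃ x ∈ K, ∀ s ∈ S, ¬ G.Adj x s) :
    upperDomaticNumber G = cliqueNumber G := by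
  classical
  obtain ⟨x, hxK, hxS⟩ := hx
  have hSK : ∀ v : V, v ∈ S ∨ v ∈ K := by
    intro v
    have : v ∈ S ∪ K := by rw [hcover]; exact Finset.mem_univ v
    simpa [Finset.mem_union] using this
  -- Upper bound: every upper domatic partition has at most |K| parts
  have hub : ∀ k ∈ {k : ℕ | ∃ P : Fin k → Set V, IsUpperDomaticPart G P}, k ≤ K.card := by
    rintro k ⟨P, ⟨hne, hdis, hun⟩, hdom⟩
    have hdom' : ∀ i j : Fin k, i ≠ j →
        Dominates G (P i) (P j) ∨ Dominates G (P j) (P i) := by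
      intro i j hij
      rcases lt_or_gt_of_ne hij with h | h
      · exact hdom i j h
      · exact (hdom j i h).symm
    by_cases hall : ∀ i : Fin k, ((P i) ∩ ↑K).Nonempty
    · have hle : (Finset.univ : Finset (Fin k)).card ≤ K.card := by
        apply Finset.card_le_card_of_injOn (fun i => (hall i).choose)
        · intro i _
          exact (hall i).choose_spec.2
        · intro i _ j _ hfij
          by_contra hij
          have h1 := (hall i).choose_spec.1
          have h2 := (hall j).choose_spec.1
          have heq : (hall i).choose = (hall j).choose := hfij
          rw [heq] at h1
          exact Set.disjoint_left.mp (hdis hij) h1 h2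
      simpa using hle
    · push_neg at hall
      obtain ⟨i₀, hi₀⟩ := hall
      have hi₀' : ¬ ((P i₀) ∩ ↑K).Nonempty := by
        rw [hi₀]
        exact Set.not_nonempty_empty
      have hsubS : ∀ i : Fin k, ¬ ((P i) ∩ ↑K).Nonempty → ∀ a ∈ P i, a ∈ S := by
        intro i hi a ha
        rcases hSK a with h | h
        · exact h
        · exact absurd ⟨a, ha, h⟩ hi
      have hrest : ∀ j : Fin k, j ≠ i₀ → ((P j) ∩ ↑K).Nonempty := by
        intro j hj
        by_contra hjE
        rcases hdom' i₀ j (Ne.symm hj) with h | h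
        · obtain ⟨b, hb⟩ := hne j
          obtain ⟨a, haP, hadj⟩ := h b hb
          exact hS a (hsubS i₀ hi₀' a haP) b (hsubS j hjE b hb) hadj
        · obtain ⟨b, hb⟩ := hne i₀
          obtain ⟨a, haP, hadj⟩ := h b hb
          exact hS a (hsubS j hjE a haP) b (hsubS i₀ hi₀' b hb) hadj
      have hxu : x ∈ ⋃ i, P i := by rw [hun]; trivial
      obtain ⟨t, ht⟩ := Set.mem_iUnion.mp hxu
      have hti₀ : t ≠ i₀ := by
        intro h
        exact hi₀' ⟨x, h ▸ ht, hxK⟩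
      -- P t meets K in some vertex other than x
      have hy : ∃ y, (y ∈ P t ∧ y ∈ K) ∧ y ≠ x := by
        by_contra hcon
        push_neg at hcon
        rcases hdom' i₀ t (Ne.symm hti₀) with h | h
        · obtain ⟨a, haP, hadj⟩ := h x ht
          exact hxS a (hsubS i₀ hi₀' a haP) hadj.symm
        · obtain ⟨b, hb⟩ := hne i₀
          obtain ⟨a, haP, hadj⟩ := h b hb
          have hbS : b ∈ S := hsubS i₀ hi₀' b hb
          rcases hSK a with haS | haK
          · exact hS a haS b hbS hadj
          · have hax : a = x := hcon a ⟨haP, haK⟩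
            exact hxS b hbS (hax ▸ hadj)
      obtain ⟨y, ⟨hyP, hyK⟩, hyx⟩ := hy
      set f : Fin k → V := fun i =>
        if i = i₀ then x else if i = t then y
        else if h : ((P i) ∩ ↑K).Nonempty then h.choose else x with hf
      have hfP : ∀ i, i ≠ i₀ → f i ∈ P i := by
        intro i hi
        by_cases hit : i = t
        · subst hit; simp only [hf, if_neg hi, if_pos rfl]; exact hyP
        · have h := hrest i hi
          simp only [hf, if_neg hi, if_neg hit, dif_pos h]
          exact h.choose_spec.1
      have hfK : ∀ i, f i ∈ K := by
        intro i
        by_cases hi : i = i₀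
        · subst hi; simp only [hf, if_pos rfl]; exact hxK
        · by_cases hit : i = t
          · subst hit; simp only [hf, if_neg hi, if_pos rfl]; exact hyK
          · have h := hrest i hi
            simp only [hf, if_neg hi, if_neg hit, dif_pos h]
            exact h.choose_spec.2
      have hfi₀ : f i₀ = x := by simp only [hf, if_pos rfl]
      have hft : f t = y := by simp [hf, hti₀]
      have hinj : Set.InjOn f (Finset.univ : Finset (Fin k)) := by
        intro i _ j _ hfij
        by_contra hij
        by_cases hi : i = i₀
        · have hfix : f i = x := by rw [hi, hfi₀]
          by_cases hjt : j = t
          · have hxy : x = y := by rw [← hfix, hfij, hjt, hft]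
            exact hyx hxy.symm
          · have hji : j ≠ i₀ := fun h => hij (hi.trans h.symm)
            have hmemj : f j ∈ P j := hfP j hji
            have hxj : f j ∉ P t :=
              Set.disjoint_left.mp (hdis hjt) hmemj
            rw [← hfij, hfix] at hxj
            exact hxj ht
        · by_cases hj : j = i₀
          · have hfjx : f j = x := by rw [hj, hfi₀]
            by_cases hit : i = t
            · have hxy : y = x := by rw [← hft, ← hit, hfij, hfjx]
              exact hyx hxy
            · have hmemi : f i ∈ P i := hfP i hi
              have hxi : f i ∉ P t :=
                Set.disjoint_left.mp (hdis hit) hmemi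
              rw [hfij, hfjx] at hxi
              exact hxi ht
          · have h1 := hfP i hi
            have h2 := hfP j hj
            rw [hfij] at h1
            exact Set.disjoint_left.mp (hdis hij) h1 h2
      have hle : (Finset.univ : Finset (Fin k)).card ≤ K.card :=
        Finset.card_le_card_of_injOn f (fun i _ => hfK i) hinj
      simpa using hle
  -- Lower bound: K.card is achieved
  have hmem : K.card ∈ {k : ℕ | ∃ P : Fin k → Set V, IsUpperDomaticPart G P} := by
    rcases Nat.eq_zero_or_pos K.card with h0 | hpos
    · -- then V is empty
      have hVempty : IsEmpty V := by
        by_contra hnev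
        rw [not_isEmpty_iff] at hnev
        obtain ⟨v⟩ := hnev
        have h1 : (1 : ℕ) ∈ {n | ∃ s : Finset V, G.IsNClique n s} :=
          ⟨{v}, by simp [SimpleGraph.isNClique_singleton]⟩
        have hbdd : BddAbove {n | ∃ s : Finset V, G.IsNClique n s} := by
          refine ⟨Fintype.card V, ?_⟩
          rintro m ⟨s, hs⟩
          rw [← hs.2]
          exact Finset.card_le_univ s
        have h2 : (1 : ℕ) ≤ cliqueNumber G := le_csSup hbdd h1
        rw [← hmax, h0] at h2
        omega
      rw [h0]
      refine ⟨Fin.elim0, ⟨⟨fun i => i.elim0, fun i => i.elim0, ?_⟩, fun i => i.elim0⟩⟩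
      rw [Set.iUnion_of_empty]
      exact (Set.univ_eq_empty_iff.mpr hVempty).symm
    · -- construct the partition from the clique
      let e : Fin K.card → V := fun i => (K.equivFin.symm i : V)
      have heK : ∀ i, e i ∈ K := fun i => (K.equivFin.symm i).2
      have heinj : Function.Injective e := by
        intro i j h
        exact K.equivFin.symm.injective (Subtype.ext h)
      have hesurj : ∀ v ∈ K, ∃ i, e i = v := by
        intro v hv
        exact ⟨K.equivFin ⟨v, hv⟩, by simp [e]⟩
      let last : Fin K.card := ⟨K.card - 1, by omega⟩
      let P : Fin K.card → Set V := fun i =>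
        if i = last then {e i} ∪ (↑K : Set V)ᶜ else {e i}
      have hmemP : ∀ i a, a ∈ P i ↔ (a = e i ∨ (i = last ∧ a ∉ K)) := by
        intro i a
        by_cases h : i = last <;> simp [P, h]
      refine ⟨P, ⟨⟨?_, ?_, ?_⟩, ?_⟩⟩
      · intro i
        exact ⟨e i, (hmemP i (e i)).mpr (Or.inl rfl)⟩
      · intro i j hij
        rw [Set.disjoint_left]
        intro a hai haj
        rcases (hmemP i a).mp hai with h1 | ⟨h1, h1'⟩ <;>
          rcases (hmemP j a).mp haj with h2 | ⟨h2, h2'⟩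
        · exact hij (heinj (h1 ▸ h2 ▸ rfl))
        · exact h2' (h1 ▸ heK i)
        · exact h1' (h2 ▸ heK j)
        · exact hij (h1.trans h2.symm)
      · ext v
        simp only [Set.mem_iUnion, Set.mem_univ, iff_true]
        by_cases hv : v ∈ K
        · obtain ⟨i, hi⟩ := hesurj v hv
          exact ⟨i, (hmemP i v).mpr (Or.inl hi.symm)⟩
        · exact ⟨last, (hmemP last v).mpr (Or.inr ⟨rfl, hv⟩)⟩
      · intro i j hij
        right
        intro b hb
        have hbi : b = e i := by
          rcases (hmemP i b).mp hb with h | ⟨hl, _⟩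
          · exact h
          · exfalso
            have h1 : (i : ℕ) < (j : ℕ) := hij
            have h2 : (j : ℕ) < K.card := j.2
            have h3 : (i : ℕ) = K.card - 1 := by rw [hl]
            omega
        refine ⟨e j, (hmemP j (e j)).mpr (Or.inl rfl), ?_⟩
        rw [hbi]
        exact hK (heK j) (heK i) (fun h => (ne_of_lt hij) (heinj h).symm)
  have hbdd : BddAbove {k : ℕ | ∃ P : Fin k → Set V, IsUpperDomaticPart G P} :=
    ⟨K.card, hub⟩
  rw [← hmax]
  exact le_antisymm (csSup_le ⟨K.card, hmem⟩ hub) (le_csSup hbdd hmem)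
end

section
/- Let G = (X ∪ Y, E) be the complement of a bipartite graph (i.e., the complement of G is bipartite with parts X and Y), and let D(G) = k. Then there exists an upper domatic partition π = {V_1, V_2, …, V_k} of G of size k such that π contains a source set. -/
variable {V : Type*}

lemma adj_of_clique (G : SimpleGraph V) {X : Set V}
    (hX : ∀ u ∈ X, ∀ w ∈ X, ¬ Gᶜ.Adj u w) {u w : V} (hu : u ∈ X) (hw : w ∈ X)
    (hne : u ≠ w) : G.Adj u w := by
  by_contra h
  exact hX u hu w hw ((SimpleGraph.compl_adj G u w).mpr ⟨hne, h⟩)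

lemma dom_clique (G : SimpleGraph V) {X : Set V}
    (hX : ∀ u ∈ X, ∀ w ∈ X, ¬ Gᶜ.Adj u w) {A B : Set V} (hA : A ⊆ X) (hB : B ⊆ X)
    (hne : A.Nonempty) (hd : Disjoint A B) : Dominates G A B := by
  intro b hb
  obtain ⟨a, ha⟩ := hne
  exact ⟨a, ha, adj_of_clique G hX (hA ha) (hB hb)
    (fun h => (Set.disjoint_left.mp hd ha) (h ▸ hb))⟩

lemma dom_mixed (G : SimpleGraph V) {X Y : Set V} (hcover : X ∪ Y = Set.univ)
    (hX : ∀ u ∈ X, ∀ w ∈ X, ¬ Gᶜ.Adj u w) (hY : ∀ u ∈ Y, ∀ w ∈ Y, ¬ Gᶜ.Adj u w)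
    {A B : Set V} (hAX : (A ∩ X).Nonempty) (hAY : (A ∩ Y).Nonempty)
    (hd : Disjoint A B) : Dominates G A B := by
  intro b hb
  have hb' : b ∈ X ∪ Y := hcover ▸ Set.mem_univ b
  rcases hb' with hbX | hbY
  · obtain ⟨a, haA, haX⟩ := hAX
    exact ⟨a, haA, adj_of_clique G hX haX hbX
      (fun h => (Set.disjoint_left.mp hd haA) (h ▸ hb))⟩
  · obtain ⟨a, haA, haY⟩ := hAY
    exact ⟨a, haA, adj_of_clique G hY haY hbY
      (fun h => (Set.disjoint_left.mp hd haA) (h ▸ hb))⟩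

lemma swap_source (G : SimpleGraph V) (X Y : Set V) (hdisj : Disjoint X Y)
    (hcover : X ∪ Y = Set.univ)
    (hX : ∀ u ∈ X, ∀ w ∈ X, ¬ Gᶜ.Adj u w) (hY : ∀ u ∈ Y, ∀ w ∈ Y, ¬ Gᶜ.Adj u w)
    {k : ℕ} (P : Fin k → Set V) (hP : IsUpperDomaticPart G P)
    (i j : Fin k) (hij : i ≠ j)
    {x x' y y' : V} (hx : x ∈ P i) (hx' : x' ∈ P i) (hxx : x ≠ x')
    (hy : y ∈ P j) (hy' : y' ∈ P j) (hyy : y ≠ y')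
    (hPiX : P i ⊆ X) (hPjY : P j ⊆ Y) :
    ∃ Q : Fin k → Set V, IsUpperDomaticPart G Q ∧
      ∃ i, ∀ j, j ≠ i → Dominates G (Q i) (Q j) := by
  classical
  obtain ⟨⟨hne, hdis, huni⟩, hdom⟩ := hP
  set Q : Fin k → Set V := fun l => if l = i then (P i \ {x}) ∪ {y}
    else if l = j then (P j \ {y}) ∪ {x} else P l with hQdef
  have hQi : Q i = (P i \ {x}) ∪ {y} := by simp [hQdef]
  have hQj : Q j = (P j \ {y}) ∪ {x} := by simp [hQdef, Ne.symm hij]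
  have hQl : ∀ l, l ≠ i → l ≠ j → Q l = P l := by
    intro l h1 h2; simp [hQdef, h1, h2]
  have hxy : x ≠ y := fun h => Set.disjoint_left.mp hdisj (hPiX hx) (h ▸ hPjY hy)
  -- memberships
  have hyQi : y ∈ Q i := by rw [hQi]; exact Or.inr rfl
  have hx'Qi : x' ∈ Q i := by rw [hQi]; exact Or.inl ⟨hx', Ne.symm hxx⟩
  have hxQj : x ∈ Q j := by rw [hQj]; exact Or.inr rfl
  have hy'Qj : y' ∈ Q j := by rw [hQj]; exact Or.inl ⟨hy', Ne.symm hyy⟩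
  have hQiX : (Q i ∩ X).Nonempty := ⟨x', hx'Qi, hPiX hx'⟩
  have hQiY : (Q i ∩ Y).Nonempty := ⟨y, hyQi, hPjY hy⟩
  have hQjX : (Q j ∩ X).Nonempty := ⟨x, hxQj, hPiX hx⟩
  have hQjY : (Q j ∩ Y).Nonempty := ⟨y', hy'Qj, hPjY hy'⟩
  -- disjointness
  have key_ij : Disjoint (Q i) (Q j) := by
    rw [hQi, hQj]
    simp only [Set.disjoint_union_left, Set.disjoint_union_right]
    refine ⟨⟨(hdis hij).mono Set.diff_subset Set.diff_subset, ?_⟩, ?_, ?_⟩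
    · rw [Set.disjoint_singleton_left]; exact fun h => h.2 rfl
    · rw [Set.disjoint_singleton_right]; exact fun h => h.2 rfl
    · rw [Set.disjoint_singleton_left, Set.mem_singleton_iff]; exact Ne.symm hxy
  have key_iO : ∀ m, m ≠ i → m ≠ j → Disjoint (Q i) (P m) := by
    intro m h1 h2
    rw [hQi]
    simp only [Set.disjoint_union_left]
    refine ⟨(hdis (Ne.symm h1)).mono Set.diff_subset le_rfl, ?_⟩
    rw [Set.disjoint_singleton_left]
    exact fun h => Set.disjoint_left.mp (hdis h2) h hy
  have key_jO : ∀ m, m ≠ i → m ≠ j → Disjoint (Q j) (P m) := by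
    intro m h1 h2
    rw [hQj]
    simp only [Set.disjoint_union_left]
    refine ⟨(hdis (Ne.symm h2)).mono Set.diff_subset le_rfl, ?_⟩
    rw [Set.disjoint_singleton_left]
    exact fun h => Set.disjoint_left.mp (hdis h1) h hx
  have hQdis : Pairwise fun l m => Disjoint (Q l) (Q m) := by
    intro l m hlm
    rcases eq_or_ne l i with rfl | hli
    · rcases eq_or_ne m j with rfl | hmj
      · exact key_ij
      · rw [hQl m (Ne.symm hlm) hmj]; exact key_iO m (Ne.symm hlm) hmj
    · rcases eq_or_ne l j with rfl | hlj
      · rcases eq_or_ne m i with rfl | hmi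
        · exact key_ij.symm
        · rw [hQl m hmi (Ne.symm hlm)]; exact key_jO m hmi (Ne.symm hlm)
      · rw [hQl l hli hlj]
        rcases eq_or_ne m i with rfl | hmi
        · exact (key_iO l hli hlj).symm
        · rcases eq_or_ne m j with rfl | hmj
          · exact (key_jO l hli hlj).symm
          · rw [hQl m hmi hmj]; exact hdis hlm
  -- nonempty
  have hQne : ∀ l, (Q l).Nonempty := by
    intro l
    rcases eq_or_ne l i with rfl | hli
    · exact ⟨y, hyQi⟩
    rcases eq_or_ne l j with rfl | hlj
    · exact ⟨x, hxQj⟩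
    rw [hQl l hli hlj]; exact hne l
  -- union
  have hQuni : (⋃ l, Q l) = Set.univ := by
    rw [Set.eq_univ_iff_forall]
    intro v
    have hv : v ∈ ⋃ l, P l := huni ▸ Set.mem_univ v
    obtain ⟨l, hl⟩ := Set.mem_iUnion.mp hv
    rcases eq_or_ne l i with rfl | hli
    · rcases eq_or_ne v x with rfl | hvx
      · exact Set.mem_iUnion.mpr ⟨j, hxQj⟩
      · exact Set.mem_iUnion.mpr ⟨l, by rw [hQi]; exact Or.inl ⟨hl, hvx⟩⟩
    rcases eq_or_ne l j with rfl | hlj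
    · rcases eq_or_ne v y with rfl | hvy
      · exact Set.mem_iUnion.mpr ⟨i, hyQi⟩
      · exact Set.mem_iUnion.mpr ⟨l, by rw [hQj]; exact Or.inl ⟨hl, hvy⟩⟩
    exact Set.mem_iUnion.mpr ⟨l, by rw [hQl l hli hlj]; exact hl⟩
  -- domination from the two mixed parts
  have hQdomi : ∀ m, m ≠ i → Dominates G (Q i) (Q m) := fun m hm =>
    dom_mixed G hcover hX hY hQiX hQiY (hQdis (Ne.symm hm))
  have hQdomj : ∀ m, m ≠ j → Dominates G (Q j) (Q m) := fun m hm =>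
    dom_mixed G hcover hX hY hQjX hQjY (hQdis (Ne.symm hm))
  refine ⟨Q, ⟨⟨hQne, hQdis, hQuni⟩, ?_⟩, ⟨i, fun m hm => hQdomi m hm⟩⟩
  intro l m hlm
  rcases eq_or_ne l i with rfl | hli
  · exact Or.inl (hQdomi m (Ne.symm hlm.ne))
  rcases eq_or_ne l j with rfl | hlj
  · exact Or.inl (hQdomj m (Ne.symm hlm.ne))
  rcases eq_or_ne m i with rfl | hmi
  · exact Or.inr (hQdomi l hli)
  rcases eq_or_ne m j with rfl | hmj
  · exact Or.inr (hQdomj l hlj)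
  rw [hQl l hli hlj, hQl m hmi hmj]
  exact hdom l m hlm

theorem complBipartite_exists_sourceSet' [Fintype V] [Nonempty V] (G : SimpleGraph V)
    (X Y : Set V) (hdisj : Disjoint X Y) (hcover : X ∪ Y = Set.univ)
    (hX : ∀ u ∈ X, ∀ w ∈ X, ¬ Gᶜ.Adj u w)
    (hY : ∀ u ∈ Y, ∀ w ∈ Y, ¬ Gᶜ.Adj u w) :
    ∃ P : Fin (sSup {k | ∃ P : Fin k → Set V, IsUpperDomaticPart G P}) → Set V,
      IsUpperDomaticPart G P ∧
      ∃ i, ∀ j, j ≠ i → Dominates G (P i) (P j) := by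
  classical
  set S : Set ℕ := {k | ∃ P : Fin k → Set V, IsUpperDomaticPart G P} with hS
  have h1 : 1 ∈ S := by
    refine ⟨fun _ => Set.univ, ⟨fun _ => Set.univ_nonempty, ?_, Set.iUnion_const _⟩, ?_⟩
    · intro a b hab; exact absurd (Subsingleton.elim a b) hab
    · intro a b hab
      exact absurd hab (by rw [Subsingleton.elim a b]; exact lt_irrefl b)
  have hbdd : BddAbove S := by
    refine ⟨Fintype.card V, ?_⟩
    rintro k ⟨P, ⟨hne, hdis, -⟩, -⟩
    have hinj : Function.Injective (fun l : Fin k => (hne l).choose) := by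
      intro a b hab
      by_contra h
      have hab' : (hne a).choose = (hne b).choose := hab
      exact Set.disjoint_left.mp (hdis h) (hne a).choose_spec
        (by rw [hab']; exact (hne b).choose_spec)
    calc k = Fintype.card (Fin k) := (Fintype.card_fin k).symm
      _ ≤ Fintype.card V := Fintype.card_le_of_injective _ hinj
  obtain ⟨P, hP⟩ : ∃ P : Fin (sSup S) → Set V, IsUpperDomaticPart G P :=
    Nat.sSup_mem ⟨1, h1⟩ hbdd
  by_cases hsrc : ∃ i, ∀ j, j ≠ i → Dominates G (P i) (P j)
  · exact ⟨P, hP, hsrc⟩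
  push_neg at hsrc
  have hne := hP.1.1
  have hdis := hP.1.2.1
  have hdom := hP.2
  -- no mixed part, so every part is pure
  have hpure : ∀ l, P l ⊆ X ∨ P l ⊆ Y := by
    intro l
    by_cases hlY : (P l ∩ Y).Nonempty
    · by_cases hlX : (P l ∩ X).Nonempty
      · exfalso
        obtain ⟨m, hm, hnd⟩ := hsrc l
        exact hnd (dom_mixed G hcover hX hY hlX hlY (hdis (Ne.symm hm)))
      · right
        intro v hv
        rcases (hcover ▸ Set.mem_univ v : v ∈ X ∪ Y) with hvX | hvY
        · exact absurd ⟨v, hv, hvX⟩ hlX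
        · exact hvY
    · left
      intro v hv
      rcases (hcover ▸ Set.mem_univ v : v ∈ X ∪ Y) with hvX | hvY
      · exact hvX
      · exact absurd ⟨v, hv, hvY⟩ hlY
  -- some part has at least two elements
  have hbig : ∃ l, ∃ a ∈ P l, ∃ b ∈ P l, a ≠ b := by
    by_contra h
    push_neg at h
    have hk1 : 1 ≤ sSup S := le_csSup hbdd h1
    obtain ⟨j, hji, hnd⟩ := hsrc ⟨0, hk1⟩
    set i : Fin (sSup S) := ⟨0, hk1⟩
    obtain ⟨a, ha⟩ := hne i
    obtain ⟨b, hb⟩ := hne j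
    have hadj : G.Adj a b ∨ G.Adj b a := by
      rcases lt_or_gt_of_ne (Ne.symm hji) with hlt | hlt
      · rcases hdom i j hlt with hD | hD
        · obtain ⟨c, hc, hcadj⟩ := hD b hb
          rw [h i c hc a ha] at hcadj; exact Or.inl hcadj
        · obtain ⟨c, hc, hcadj⟩ := hD a ha
          rw [h j c hc b hb] at hcadj; exact Or.inr hcadj
      · rcases hdom j i hlt with hD | hD
        · obtain ⟨c, hc, hcadj⟩ := hD a ha
          rw [h j c hc b hb] at hcadj; exact Or.inr hcadj
        · obtain ⟨c, hc, hcadj⟩ := hD b hb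
          rw [h i c hc a ha] at hcadj; exact Or.inl hcadj
    have hadj2 : G.Adj a b := hadj.elim id fun h' => G.adj_symm h'
    apply hnd
    intro b' hb'
    exact ⟨a, ha, by rw [h j b' hb' b hb]; exact hadj2⟩
  obtain ⟨l, a, ha, b, hb, hab⟩ := hbig
  obtain ⟨m, hml, hnd⟩ := hsrc l
  have hlm : l ≠ m := Ne.symm hml
  have hCA : Dominates G (P m) (P l) := by
    rcases lt_or_gt_of_ne hlm with h | h
    · rcases hdom l m h with hD | hD
      · exact absurd hD hnd
      · exact hD
    · rcases hdom m l h with hD | hD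
      · exact hD
      · exact absurd hD hnd
  unfold Dominates at hnd
  push_neg at hnd
  obtain ⟨y, hy, hyno⟩ := hnd
  have hy2 : ∃ y' ∈ P m, y' ≠ y := by
    by_contra h
    push_neg at h
    obtain ⟨c, hc, hcad⟩ := hCA a ha
    exact hyno a ha (by rw [h c hc] at hcad; exact G.adj_symm hcad)
  obtain ⟨y', hy', hy'y⟩ := hy2
  have haym : a ≠ y := fun h => Set.disjoint_left.mp (hdis hlm) ha (h ▸ hy)
  rcases hpure l with hl | hl <;> rcases hpure m with hm | hm
  · exact absurd (adj_of_clique G hX (hl ha) (hm hy) haym) (hyno a ha)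
  · exact swap_source G X Y hdisj hcover hX hY P hP l m hlm ha hb hab hy hy'
      (Ne.symm hy'y) hl hm
  · exact swap_source G Y X hdisj.symm (by rw [Set.union_comm]; exact hcover) hY hX
      P hP l m hlm ha hb hab hy hy' (Ne.symm hy'y) hl hm
  · exact absurd (adj_of_clique G hY (hl ha) (hm hy) haym) (hyno a ha)


/-- If `G` is the complement of a bipartite graph with parts `X` and `Y`,
then `G` has an upper domatic partition of size `D(G)` containing a source set. -/
theorem complBipartite_exists_sourceSet [Fintype V] [Nonempty V] (G : SimpleGraph V)
    (X Y : Set V) (hdisj : Disjoint X Y) (hcover : X ∪ Y = Set.univ)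
    (hX : ∀ u ∈ X, ∀ w ∈ X, ¬ Gᶜ.Adj u w)
    (hY : ∀ u ∈ Y, ∀ w ∈ Y, ¬ Gᶜ.Adj u w) :
    ∃ P : Fin (upperDomaticNumber G) → Set V, IsUpperDomaticPart G P ∧
      ∃ i, ∀ j, j ≠ i → Dominates G (P i) (P j) := by
  exact complBipartite_exists_sourceSet' G X Y hdisj hcover hX hY
end

section
/- Let G = (X ∪ Y, E) be the complement of a bipartite graph (i.e., the complement of G is bipartite with parts X and Y). Then Tr(G) = D(G). -/
variable {V : Type*}

namespace ComplBipartiteAux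

/-- Two distinct vertices on the same side of the complement-bipartition are adjacent. -/
lemma adj_same_side (G : SimpleGraph V) {X : Set V}
    (hX : ∀ u ∈ X, ∀ w ∈ X, ¬ Gᶜ.Adj u w) {a b : V}
    (ha : a ∈ X) (hb : b ∈ X) (hne : a ≠ b) : G.Adj a b := by
  have h := hX a ha b hb
  rw [SimpleGraph.compl_adj] at h
  push_neg at h
  exact h hne

lemma subset_side {X Y : Set V} (hcover : X ∪ Y = Set.univ) {S : Set V}
    (h : S ∩ Y = ∅) : S ⊆ X := by
  intro t ht
  have htu : t ∈ X ∪ Y := by rw [hcover]; trivial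
  rcases htu with h' | h'
  · exact h'
  · exfalso
    have : t ∈ S ∩ Y := ⟨ht, h'⟩
    rw [h] at this
    exact this

/-- A set meeting both sides dominates every set disjoint from it. -/
lemma mixed_dominates (G : SimpleGraph V) {X Y : Set V}
    (hcover : X ∪ Y = Set.univ)
    (hX : ∀ u ∈ X, ∀ w ∈ X, ¬ Gᶜ.Adj u w) (hY : ∀ u ∈ Y, ∀ w ∈ Y, ¬ Gᶜ.Adj u w)
    {S T : Set V} (hSX : (S ∩ X).Nonempty) (hSY : (S ∩ Y).Nonempty)
    (hST : Disjoint S T) : Dominates G S T := by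
  intro t ht
  have htu : t ∈ X ∪ Y := by rw [hcover]; trivial
  rcases htu with h' | h'
  · obtain ⟨x₀, hx₀S, hx₀X⟩ := hSX
    exact ⟨x₀, hx₀S, adj_same_side G hX hx₀X h'
      (fun hEq => (Set.disjoint_left.mp hST hx₀S) (hEq ▸ ht))⟩
  · obtain ⟨y₀, hy₀S, hy₀Y⟩ := hSY
    exact ⟨y₀, hy₀S, adj_same_side G hY hy₀Y h'
      (fun hEq => (Set.disjoint_left.mp hST hy₀S) (hEq ▸ ht))⟩

/-- A nonempty subset of a side dominates any disjoint subset of the same side. -/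
lemma same_side_dominates (G : SimpleGraph V) {X : Set V}
    (hX : ∀ u ∈ X, ∀ w ∈ X, ¬ Gᶜ.Adj u w) {S T : Set V}
    (hS : S ⊆ X) (hT : T ⊆ X) (hST : Disjoint S T) (hSne : S.Nonempty) :
    Dominates G S T := by
  intro t ht
  obtain ⟨s, hs⟩ := hSne
  exact ⟨s, hs, adj_same_side G hX (hS hs) (hT ht)
    (fun hEq => (Set.disjoint_left.mp hST hs) (hEq ▸ ht))⟩

/-- If one of the two domination directions holds and `T` is a subsingleton,
then `S` dominates `T`. -/
lemma dom_of_subsingleton (G : SimpleGraph V) {S T : Set V}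
    (h : Dominates G S T ∨ Dominates G T S) (hT : T.Subsingleton) (hS : S.Nonempty) :
    Dominates G S T := by
  rcases h with h | h
  · exact h
  · intro t ht
    obtain ⟨s, hs⟩ := hS
    obtain ⟨t', ht', hadj⟩ := h s hs
    have : t' = t := hT ht' ht
    exact ⟨s, hs, (this ▸ hadj).symm⟩

open Classical in
/-- The number of non-mixed parts. -/
noncomputable def pureCount {k : ℕ} (X Y : Set V) (P : Fin k → Set V) : ℕ :=
  (Finset.univ.filter fun l => ¬((P l ∩ X).Nonempty ∧ (P l ∩ Y).Nonempty)).card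

/-- Sorting construction: if all parts avoiding `X` are subsingletons, then an
upper domatic partition can be reordered into a transitive partition. -/
lemma exists_sorted (G : SimpleGraph V) {X Y : Set V} (hcover : X ∪ Y = Set.univ)
    (hX : ∀ u ∈ X, ∀ w ∈ X, ¬ Gᶜ.Adj u w) (hY : ∀ u ∈ Y, ∀ w ∈ Y, ¬ Gᶜ.Adj u w)
    {k : ℕ} {P : Fin k → Set V} (hUD : IsUpperDomaticPart G P)
    (hsmall : ∀ l, P l ∩ X = ∅ → (P l).Subsingleton) :
    ∃ Q : Fin k → Set V, IsTransitivePartOn G Set.univ Q := by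
  classical
  obtain ⟨⟨hne, hdisjP, hcov⟩, hdom⟩ := hUD
  have hUDp : ∀ a b : Fin k, a ≠ b →
      (Dominates G (P a) (P b) ∨ Dominates G (P b) (P a)) := by
    intro a b hab
    rcases lt_or_gt_of_ne hab with h | h
    · exact hdom a b h
    · exact (hdom b a h).symm
  let key : Fin k → ℕ := fun l =>
    if ((P l ∩ X).Nonempty ∧ (P l ∩ Y).Nonempty) then 0 else if (P l ∩ Y) = ∅ then 1 else 2
  let σ := Tuple.sort key
  refine ⟨fun l => P (σ l), ⟨⟨fun l => hne _, ?_, ?_⟩, ?_⟩⟩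
  · intro a b hab
    exact hdisjP (fun h => hab (σ.injective h))
  · apply Set.eq_univ_of_forall
    intro t
    have ht : t ∈ ⋃ l, P l := by rw [hcov]; trivial
    obtain ⟨l, hl⟩ := Set.mem_iUnion.mp ht
    exact Set.mem_iUnion.mpr ⟨σ.symm l, by simpa using hl⟩
  · intro a b hab
    have hmon : key (σ a) ≤ key (σ b) := Tuple.monotone_sort key hab.le
    have hsne : σ a ≠ σ b := fun h => (ne_of_lt hab) (σ.injective h)
    have hdisj2 : Disjoint (P (σ a)) (P (σ b)) := hdisjP hsne
    by_cases h1 : ((P (σ a) ∩ X).Nonempty ∧ (P (σ a) ∩ Y).Nonempty)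
    · exact mixed_dominates G hcover hX hY h1.1 h1.2 hdisj2
    by_cases h2 : (P (σ a) ∩ Y) = ∅
    · have hkA : key (σ a) = 1 := by simp only [key, if_neg h1, if_pos h2]
      by_cases h3 : ((P (σ b) ∩ X).Nonempty ∧ (P (σ b) ∩ Y).Nonempty)
      · exfalso
        have hkB : key (σ b) = 0 := by simp only [key, if_pos h3]
        rw [hkA, hkB] at hmon
        omega
      by_cases h4 : (P (σ b) ∩ Y) = ∅
      · exact same_side_dominates G hX (subset_side hcover h2) (subset_side hcover h4)
          hdisj2 (hne _)
      · have hbX : P (σ b) ∩ X = ∅ := by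
          rcases not_and_or.mp h3 with h | h
          · exact Set.not_nonempty_iff_eq_empty.mp h
          · exact absurd (Set.nonempty_iff_ne_empty.mpr h4) h
        exact dom_of_subsingleton G (hUDp _ _ hsne) (hsmall _ hbX) (hne _)
    · have haX : P (σ a) ∩ X = ∅ := by
        rcases not_and_or.mp h1 with h | h
        · exact Set.not_nonempty_iff_eq_empty.mp h
        · exact absurd (Set.nonempty_iff_ne_empty.mpr h2) h
      have hkA : key (σ a) = 2 := by simp only [key, if_neg h1, if_neg h2]
      have hbX : P (σ b) ∩ X = ∅ := by
        by_cases h3 : ((P (σ b) ∩ X).Nonempty ∧ (P (σ b) ∩ Y).Nonempty)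
        · exfalso
          have hkB : key (σ b) = 0 := by simp only [key, if_pos h3]
          rw [hkA, hkB] at hmon; omega
        by_cases h4 : (P (σ b) ∩ Y) = ∅
        · exfalso
          have hkB : key (σ b) = 1 := by simp only [key, if_neg h3, if_pos h4]
          rw [hkA, hkB] at hmon; omega
        · rcases not_and_or.mp h3 with h | h
          · exact Set.not_nonempty_iff_eq_empty.mp h
          · exact absurd (Set.nonempty_iff_ne_empty.mpr h4) h
      have hcover' : Y ∪ X = Set.univ := by rw [Set.union_comm]; exact hcover
      exact same_side_dominates G hY (subset_side hcover' haX) (subset_side hcover' hbX)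
        hdisj2 (hne _)

/-- The swap step: exchanging a vertex between a nontrivial pure `X`-part and a
nontrivial pure `Y`-part produces an upper domatic partition with two more mixed parts. -/
lemma swap_step (G : SimpleGraph V) {X Y : Set V} (hdisj : Disjoint X Y)
    (hcover : X ∪ Y = Set.univ)
    (hX : ∀ u ∈ X, ∀ w ∈ X, ¬ Gᶜ.Adj u w) (hY : ∀ u ∈ Y, ∀ w ∈ Y, ¬ Gᶜ.Adj u w)
    {k : ℕ} {P : Fin k → Set V} (hUD : IsUpperDomaticPart G P)
    {i j : Fin k} (hij : i ≠ j) (hiY : P i ∩ Y = ∅) (hibig : (P i).Nontrivial)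
    (hjX : P j ∩ X = ∅) (hjbig : (P j).Nontrivial) :
    ∃ P' : Fin k → Set V, IsUpperDomaticPart G P' ∧ pureCount X Y P' < pureCount X Y P := by
  classical
  obtain ⟨⟨hne, hdisjP, hcov⟩, hdom⟩ := hUD
  have hAX : P i ⊆ X := subset_side hcover hiY
  have hBY : P j ⊆ Y := subset_side (by rw [Set.union_comm]; exact hcover) hjX
  obtain ⟨x, hx, x', hx', hxx'⟩ := hibig
  obtain ⟨y, hy, y', hy', hyy'⟩ := hjbig
  have hxy : x ≠ y := fun h => (Set.disjoint_left.mp hdisj (hAX hx)) (h ▸ hBY hy)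
  set P' : Fin k → Set V :=
    fun l => if l = i then (P i \ {x}) ∪ {y} else if l = j then (P j \ {y}) ∪ {x} else P l
    with hP'def
  have hP'i : P' i = (P i \ {x}) ∪ {y} := by simp [hP'def]
  have hP'j : P' j = (P j \ {y}) ∪ {x} := by simp [hP'def, Ne.symm hij]
  have hP'other : ∀ l, l ≠ i → l ≠ j → P' l = P l := by
    intro l h1 h2; simp [hP'def, h1, h2]
  have hP'iX : (P' i ∩ X).Nonempty := by
    refine ⟨x', ?_, hAX hx'⟩
    rw [hP'i]
    exact Or.inl ⟨hx', by simp [Ne.symm hxx']⟩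
  have hP'iY : (P' i ∩ Y).Nonempty := by
    refine ⟨y, ?_, hBY hy⟩
    rw [hP'i]; exact Or.inr rfl
  have hP'jY : (P' j ∩ Y).Nonempty := by
    refine ⟨y', ?_, hBY hy'⟩
    rw [hP'j]
    exact Or.inl ⟨hy', by simp [Ne.symm hyy']⟩
  have hP'jX : (P' j ∩ X).Nonempty := by
    refine ⟨x, ?_, hAX hx⟩
    rw [hP'j]; exact Or.inr rfl
  have hsub_i : P' i ⊆ P i ∪ P j := by
    rw [hP'i]
    rintro t (⟨h, _⟩ | h)
    · exact Or.inl h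
    · rw [Set.mem_singleton_iff.mp h]; exact Or.inr hy
  have hsub_j : P' j ⊆ P i ∪ P j := by
    rw [hP'j]
    rintro t (⟨h, _⟩ | h)
    · exact Or.inr h
    · rw [Set.mem_singleton_iff.mp h]; exact Or.inl hx
  have hij' : Disjoint (P' i) (P' j) := by
    rw [hP'i, hP'j, Set.disjoint_left]
    rintro t (⟨htA, htx⟩ | hty) htj
    · rcases htj with ⟨htB, _⟩ | htx'
      · exact (Set.disjoint_left.mp (hdisjP hij) htA) htB
      · exact htx htx'
    · have hty' : t = y := Set.mem_singleton_iff.mp hty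
      rcases htj with ⟨_, htny⟩ | htx'
      · exact htny hty
      · exact hxy (by rw [← Set.mem_singleton_iff.mp htx', hty'])
  have hil : ∀ l, l ≠ i → l ≠ j → Disjoint (P' i) (P l) := by
    intro l h1 h2
    refine Set.disjoint_left.mpr fun t ht htl => ?_
    rcases hsub_i ht with h | h
    · exact Set.disjoint_left.mp (hdisjP (Ne.symm h1)) h htl
    · exact Set.disjoint_left.mp (hdisjP (Ne.symm h2)) h htl
  have hjl : ∀ l, l ≠ i → l ≠ j → Disjoint (P' j) (P l) := by
    intro l h1 h2
    refine Set.disjoint_left.mpr fun t ht htl => ?_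
    rcases hsub_j ht with h | h
    · exact Set.disjoint_left.mp (hdisjP (Ne.symm h1)) h htl
    · exact Set.disjoint_left.mp (hdisjP (Ne.symm h2)) h htl
  have hdisjP' : Pairwise fun a b => Disjoint (P' a) (P' b) := by
    intro a b hab
    rcases eq_or_ne a i with rfl | hai
    · rcases eq_or_ne b j with rfl | hbj
      · exact hij'
      · have hbi : b ≠ a := Ne.symm hab
        rw [hP'other b hbi hbj]
        exact hil b hbi hbj
    · rcases eq_or_ne a j with rfl | haj
      · rcases eq_or_ne b i with rfl | hbi
        · exact hij'.symm
        · have hbj : b ≠ a := Ne.symm hab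
          rw [hP'other b hbi hbj]
          exact hjl b hbi hbj
      · rw [hP'other a hai haj]
        rcases eq_or_ne b i with rfl | hbi
        · exact (hil a hai haj).symm
        · rcases eq_or_ne b j with rfl | hbj
          · exact (hjl a hai haj).symm
          · rw [hP'other b hbi hbj]
            exact hdisjP hab
  have hne' : ∀ l, (P' l).Nonempty := by
    intro l
    rcases eq_or_ne l i with rfl | hli
    · exact ⟨y, by rw [hP'i]; exact Or.inr rfl⟩
    rcases eq_or_ne l j with rfl | hlj
    · exact ⟨x, by rw [hP'j]; exact Or.inr rfl⟩
    · rw [hP'other l hli hlj]; exact hne l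
  have hcov' : (⋃ l, P' l) = Set.univ := by
    apply Set.eq_univ_of_forall
    intro t
    have ht : t ∈ ⋃ l, P l := by rw [hcov]; trivial
    obtain ⟨l, hl⟩ := Set.mem_iUnion.mp ht
    apply Set.mem_iUnion.mpr
    rcases eq_or_ne l i with rfl | hli
    · rcases eq_or_ne t x with rfl | htx
      · exact ⟨j, by rw [hP'j]; exact Or.inr rfl⟩
      · exact ⟨l, by rw [hP'i]; exact Or.inl ⟨hl, htx⟩⟩
    rcases eq_or_ne l j with rfl | hlj
    · rcases eq_or_ne t y with rfl | hty
      · exact ⟨i, by rw [hP'i]; exact Or.inr rfl⟩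
      · exact ⟨l, by rw [hP'j]; exact Or.inl ⟨hl, hty⟩⟩
    · exact ⟨l, by rw [hP'other l hli hlj]; exact hl⟩
  have hmixdom_i : ∀ (T : Set V), Disjoint (P' i) T → Dominates G (P' i) T :=
    fun T hT => mixed_dominates G hcover hX hY hP'iX hP'iY hT
  have hmixdom_j : ∀ (T : Set V), Disjoint (P' j) T → Dominates G (P' j) T :=
    fun T hT => mixed_dominates G hcover hX hY hP'jX hP'jY hT
  have hdom' : ∀ a b : Fin k, a < b →
      Dominates G (P' a) (P' b) ∨ Dominates G (P' b) (P' a) := by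
    intro a b hab
    rcases eq_or_ne a i with rfl | hai
    · exact Or.inl (hmixdom_i _ (hdisjP' (ne_of_lt hab)))
    rcases eq_or_ne a j with rfl | haj
    · exact Or.inl (hmixdom_j _ (hdisjP' (ne_of_lt hab)))
    rcases eq_or_ne b i with rfl | hbi
    · exact Or.inr (hmixdom_i _ (hdisjP' (ne_of_lt hab)).symm)
    rcases eq_or_ne b j with rfl | hbj
    · exact Or.inr (hmixdom_j _ (hdisjP' (ne_of_lt hab)).symm)
    · rw [hP'other a hai haj, hP'other b hbi hbj]
      exact hdom a b hab
  refine ⟨P', ⟨⟨hne', hdisjP', hcov'⟩, hdom'⟩, ?_⟩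
  unfold pureCount
  apply Finset.card_lt_card
  rw [Finset.ssubset_iff_subset_ne]
  constructor
  · intro l hl
    simp only [Finset.mem_filter, Finset.mem_univ, true_and] at hl ⊢
    rcases eq_or_ne l i with rfl | hli
    · exact absurd ⟨hP'iX, hP'iY⟩ hl
    rcases eq_or_ne l j with rfl | hlj
    · exact absurd ⟨hP'jX, hP'jY⟩ hl
    · rwa [hP'other l hli hlj] at hl
  · intro hEq
    have hiMem : i ∈ Finset.univ.filter
        (fun l => ¬((P l ∩ X).Nonempty ∧ (P l ∩ Y).Nonempty)) := by
      simp only [Finset.mem_filter, Finset.mem_univ, true_and]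
      rintro ⟨_, h⟩
      rw [hiY] at h
      exact Set.not_nonempty_empty h
    rw [← hEq] at hiMem
    simp only [Finset.mem_filter, Finset.mem_univ, true_and] at hiMem
    exact hiMem ⟨hP'iX, hP'iY⟩

/-- Main lemma: every upper domatic partition yields a transitive partition of the
same size. -/
lemma exists_transitive_of_upperDomatic (G : SimpleGraph V) {X Y : Set V}
    (hdisj : Disjoint X Y) (hcover : X ∪ Y = Set.univ)
    (hX : ∀ u ∈ X, ∀ w ∈ X, ¬ Gᶜ.Adj u w) (hY : ∀ u ∈ Y, ∀ w ∈ Y, ¬ Gᶜ.Adj u w)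
    {k : ℕ} (P : Fin k → Set V) (hUD : IsUpperDomaticPart G P) :
    ∃ Q : Fin k → Set V, IsTransitivePartOn G Set.univ Q := by
  classical
  suffices H : ∀ (n : ℕ) (P : Fin k → Set V), IsUpperDomaticPart G P →
      pureCount X Y P ≤ n → ∃ Q : Fin k → Set V, IsTransitivePartOn G Set.univ Q from
    H (pureCount X Y P) P hUD le_rfl
  intro n
  induction n with
  | zero =>
    intro P hUD hle
    apply exists_sorted G hcover hX hY hUD
    intro l hlX
    exfalso
    have hmem : l ∈ Finset.univ.filter
        (fun l => ¬((P l ∩ X).Nonempty ∧ (P l ∩ Y).Nonempty)) := by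
      simp only [Finset.mem_filter, Finset.mem_univ, true_and]
      rintro ⟨h, _⟩
      rw [hlX] at h
      exact Set.not_nonempty_empty h
    have hpos : 0 < pureCount X Y P := Finset.card_pos.mpr ⟨l, hmem⟩
    omega
  | succ n ih =>
    intro P hUD hle
    by_cases hsw : (∃ i, P i ∩ Y = ∅ ∧ (P i).Nontrivial) ∧
        (∃ j, P j ∩ X = ∅ ∧ (P j).Nontrivial)
    · obtain ⟨⟨i, hiY, hibig⟩, j, hjX, hjbig⟩ := hsw
      have hij : i ≠ j := by
        rintro rfl
        obtain ⟨t, ht⟩ := hUD.1.1 i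
        have htu : t ∈ X ∪ Y := by rw [hcover]; trivial
        rcases htu with h | h
        · have : t ∈ P i ∩ X := ⟨ht, h⟩
          rw [hjX] at this; exact this
        · have : t ∈ P i ∩ Y := ⟨ht, h⟩
          rw [hiY] at this; exact this
      obtain ⟨P', hP'UD, hlt⟩ := swap_step G hdisj hcover hX hY hUD hij hiY hibig hjX hjbig
      exact ih P' hP'UD (by omega)
    · rcases not_and_or.mp hsw with h | h
      · push_neg at h
        have hcover' : Y ∪ X = Set.univ := by rw [Set.union_comm]; exact hcover
        apply exists_sorted G hcover' hY hX hUD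
        intro l hlY
        exact h l hlY
      · push_neg at h
        apply exists_sorted G hcover hX hY hUD
        intro l hlX
        exact h l hlX

end ComplBipartiteAux

/-- If `G` is the complement of a bipartite graph with parts `X` and `Y`,
then `Tr(G) = D(G)`. -/
theorem complBipartite_transitivity_eq_upperDomatic [Fintype V] (G : SimpleGraph V)
    (X Y : Set V) (hdisj : Disjoint X Y) (hcover : X ∪ Y = Set.univ)
    (hX : ∀ u ∈ X, ∀ w ∈ X, ¬ Gᶜ.Adj u w)
    (hY : ∀ u ∈ Y, ∀ w ∈ Y, ¬ Gᶜ.Adj u w) :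
    transitivityNumber G = upperDomaticNumber G := by
  have hset : {k | ∃ P : Fin k → Set V, IsTransitivePartOn G Set.univ P} =
      {k | ∃ P : Fin k → Set V, IsUpperDomaticPart G P} := by
    ext k
    constructor
    · rintro ⟨P, hpart, hdom⟩
      exact ⟨P, hpart, fun i j hij => Or.inl (hdom i j hij)⟩
    · rintro ⟨P, hUD⟩
      exact ComplBipartiteAux.exists_transitive_of_upperDomatic G hdisj hcover hX hY P hUD
  unfold transitivityNumber upperDomaticNumber
  rw [hset]
end

section
/- Let G be a graph that has a D-partition π of order k containing a set V_j which is dominated by k − 3 of the other sets and which dominates the two remaining sets V_{j_1} and V_{j_2}. If V_j ∩ N(V_{j_1}) ∩ N(V_{j_2}) ≠ ∅, then G has a D-partition π′ containing a sink set. -/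
variable {V : Type*}

/-- `N(A)`: the set of vertices having at least one neighbour in `A`. -/
def NbrSet (G : SimpleGraph V) (A : Set V) : Set V :=
  {u | ∃ a ∈ A, G.Adj u a}

lemma aux_sink (G : SimpleGraph V) {k : ℕ}
    (P : Fin k → Set V) (hP : IsUpperDomaticPart G P)
    (j t s : Fin k) (ht : t ≠ j) (hs : s ≠ j) (hst : s ≠ t)
    (x : V) (hx : x ∈ P j) (hxt : x ∈ NbrSet G (P t)) (hxs : x ∈ NbrSet G (P s))
    (hdom : ∀ i, i ≠ j → i ≠ t → i ≠ s → Dominates G (P i) (P j))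
    (hts : Dominates G (P t) (P s)) :
    ∃ Q : Fin k → Set V, IsUpperDomaticPart G Q ∧
      ∃ i, ∀ m, m ≠ i → Dominates G (Q m) (Q i) := by
  classical
  obtain ⟨⟨hne, hdisj, huniv⟩, hupper⟩ := hP
  set Q : Fin k → Set V :=
    fun i => if i = j then {x} else if i = t then P t ∪ (P j \ {x}) else P i with hQdef
  have hQj : Q j = {x} := by simp [hQdef]
  have hQt : Q t = P t ∪ (P j \ {x}) := by simp [hQdef, ht]
  have hQo : ∀ i, i ≠ j → i ≠ t → Q i = P i := by
    intro i hij hit; simp [hQdef, hij, hit]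
  have hxnot : ∀ i, i ≠ j → x ∉ P i := by
    intro i hij hxi
    exact (hdisj hij).le_bot ⟨hxi, hx⟩ |>.elim
  -- sink property
  have hsink : ∀ m, m ≠ j → Dominates G (Q m) (Q j) := by
    intro m hm
    rw [hQj]
    intro b hb
    rw [Set.mem_singleton_iff] at hb
    rw [hb]
    by_cases hmt : m = t
    · rw [hmt, hQt]
      obtain ⟨a, ha, hadj⟩ := hxt
      exact ⟨a, Or.inl ha, hadj.symm⟩
    · rw [hQo m hm hmt]
      by_cases hms : m = s
      · rw [hms]
        obtain ⟨a, ha, hadj⟩ := hxs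
        exact ⟨a, ha, hadj.symm⟩
      · exact hdom m hm hmt hms x hx
  -- domination dichotomy for Q
  have horig : ∀ a b : Fin k, a ≠ b →
      Dominates G (P a) (P b) ∨ Dominates G (P b) (P a) := by
    intro a b hab
    rcases lt_or_gt_of_ne hab with h | h
    · exact hupper a b h
    · exact (hupper b a h).symm
  -- key one-sided fact: Q t dominates Q b or Q b dominates Q t, for b ∉ {j, t}
  have htb : ∀ b : Fin k, b ≠ j → b ≠ t →
      Dominates G (Q t) (Q b) ∨ Dominates G (Q b) (Q t) := by
    intro b hbj hbt
    rw [hQt, hQo b hbj hbt]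
    by_cases hbs : b = s
    · left
      rw [hbs]
      intro v hv
      obtain ⟨u, hu, hadj⟩ := hts v hv
      exact ⟨u, Or.inl hu, hadj⟩
    · rcases horig t b (Ne.symm hbt) with h | h
      · left
        intro v hv
        obtain ⟨u, hu, hadj⟩ := h v hv
        exact ⟨u, Or.inl hu, hadj⟩
      · right
        rintro v (hv | hv)
        · exact h v hv
        · exact hdom b hbj hbt hbs v hv.1
  have hdich : ∀ a b : Fin k, a ≠ b →
      Dominates G (Q a) (Q b) ∨ Dominates G (Q b) (Q a) := by
    intro a b hab
    by_cases haj : a = j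
    · have hbj : b ≠ j := fun h => hab (haj.trans h.symm)
      rw [haj]
      exact Or.inr (hsink b hbj)
    by_cases hbj : b = j
    · rw [hbj]
      exact Or.inl (hsink a haj)
    by_cases hat : a = t
    · rw [hat]
      exact htb b hbj (fun h => hab (hat.trans h.symm))
    by_cases hbt : b = t
    · rw [hbt]
      exact (htb a haj hat).symm
    · rw [hQo a haj hat, hQo b hbj hbt]
      exact horig a b hab
  refine ⟨Q, ⟨⟨?_, ?_, ?_⟩, fun a b h => hdich a b (ne_of_lt h)⟩, j, hsink⟩
  · -- nonempty
    intro i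
    by_cases hij : i = j
    · rw [hij, hQj]; exact ⟨x, rfl⟩
    by_cases hit : i = t
    · rw [hit, hQt]; exact (hne t).mono Set.subset_union_left
    · rw [hQo i hij hit]; exact hne i
  · -- pairwise disjoint
    have key : ∀ a b : Fin k, a ≠ b → a ≠ j → a ≠ t → Disjoint (Q a) (Q b) := by
      intro a b hab haj hat
      rw [Set.disjoint_left, hQo a haj hat]
      intro v hva hvb
      by_cases hbj : b = j
      · rw [hbj, hQj, Set.mem_singleton_iff] at hvb
        exact hxnot a haj (hvb ▸ hva)
      by_cases hbt : b = t
      · rw [hbt, hQt] at hvb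
        rcases hvb with h | h
        · exact (hdisj hat).le_bot ⟨hva, h⟩
        · exact (hdisj haj).le_bot ⟨hva, h.1⟩
      · rw [hQo b hbj hbt] at hvb
        exact (hdisj hab).le_bot ⟨hva, hvb⟩
    intro a b hab
    by_cases haj : a = j
    · rw [haj, hQj, Set.disjoint_left]
      intro v hva hvb
      rw [Set.mem_singleton_iff] at hva
      have hbj : b ≠ j := fun h => hab (haj.trans h.symm)
      by_cases hbt : b = t
      · rw [hbt, hQt] at hvb
        rcases hvb with h | h
        · exact hxnot t ht (hva ▸ h)
        · exact h.2 (hva ▸ rfl)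
      · rw [hQo b hbj hbt] at hvb
        exact hxnot b hbj (hva ▸ hvb)
    by_cases hat : a = t
    · rw [hat]
      have hbt : b ≠ t := fun h => hab (hat.trans h.symm)
      rw [Set.disjoint_left, hQt]
      intro v hva hvb
      by_cases hbj : b = j
      · rw [hbj, hQj, Set.mem_singleton_iff] at hvb
        rcases hva with h | h
        · exact hxnot t ht (hvb ▸ h)
        · exact h.2 (hvb ▸ rfl)
      · rw [hQo b hbj hbt] at hvb
        rcases hva with h | h
        · exact (hdisj (Ne.symm hbt)).le_bot ⟨h, hvb⟩
        · exact (hdisj hbj).le_bot ⟨hvb, h.1⟩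
    · exact key a b hab haj hat
  · -- union = univ
    apply Set.eq_univ_of_forall
    intro v
    have hv : v ∈ ⋃ i, P i := huniv ▸ Set.mem_univ v
    obtain ⟨i, hi⟩ := Set.mem_iUnion.mp hv
    by_cases hij : i = j
    · rw [hij] at hi
      by_cases hvx : v = x
      · exact Set.mem_iUnion.mpr ⟨j, by rw [hQj, hvx]; rfl⟩
      · exact Set.mem_iUnion.mpr ⟨t, by rw [hQt]; exact Or.inr ⟨hi, hvx⟩⟩
    by_cases hit : i = t
    · rw [hit] at hi
      exact Set.mem_iUnion.mpr ⟨t, by rw [hQt]; exact Or.inl hi⟩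
    · exact Set.mem_iUnion.mpr ⟨i, by rw [hQo i hij hit]; exact hi⟩

/-- If `G` has a `D`-partition of order `k` containing a set `V_j`
dominated by the `k - 3` sets other than `V_{j₁}, V_{j₂}`, where `V_j` dominates
`V_{j₁}` and `V_{j₂}`, and if `V_j ∩ N(V_{j₁}) ∩ N(V_{j₂}) ≠ ∅`, then `G` has a
`D`-partition containing a sink set. -/
theorem Dpartition_sinkSet_of_meets_nbrs [Fintype V] (G : SimpleGraph V)
    (k : ℕ) (hk : upperDomaticNumber G = k)
    (P : Fin k → Set V) (hP : IsUpperDomaticPart G P)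
    (j j1 j2 : Fin k) (h1 : j1 ≠ j) (h2 : j2 ≠ j) (h12 : j1 ≠ j2)
    (hdom : ∀ i, i ≠ j → i ≠ j1 → i ≠ j2 → Dominates G (P i) (P j))
    (hjd1 : Dominates G (P j) (P j1)) (hjd2 : Dominates G (P j) (P j2))
    (hne : (P j ∩ NbrSet G (P j1) ∩ NbrSet G (P j2)).Nonempty) :
    ∃ Q : Fin k → Set V, IsUpperDomaticPart G Q ∧
      ∃ i, ∀ m, m ≠ i → Dominates G (Q m) (Q i) := by
  obtain ⟨x, hx⟩ := hne
  obtain ⟨⟨hxj, hx1⟩, hx2⟩ := hx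
  rcases lt_or_gt_of_ne h12 with h | h
  · rcases hP.2 j1 j2 h with hc | hc
    · exact aux_sink G P hP j j1 j2 h1 h2 (Ne.symm h12) x hxj hx1 hx2
        (fun i a b c => hdom i a b c) hc
    · exact aux_sink G P hP j j2 j1 h2 h1 h12 x hxj hx2 hx1
        (fun i a b c => hdom i a c b) hc
  · rcases hP.2 j2 j1 h with hc | hc
    · exact aux_sink G P hP j j2 j1 h2 h1 h12 x hxj hx2 hx1
        (fun i a b c => hdom i a c b) hc
    · exact aux_sink G P hP j j1 j2 h1 h2 (Ne.symm h12) x hxj hx1 hx2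
        (fun i a b c => hdom i a b c) hc
end

section
/- Let G be a 2K_2-free graph with D(G) = 5. Then there exists a D-partition of G that contains a sink set. -/
variable {V : Type*}

section aux

variable {G : SimpleGraph V}

private lemma dom_mono_left {A A' B : Set V} (h : Dominates G A B) (hs : A ⊆ A') :
    Dominates G A' B := fun x hx => by
  obtain ⟨a, ha, hadj⟩ := h x hx; exact ⟨a, hs ha, hadj⟩

private lemma dom_mono_right {A B B' : Set V} (h : Dominates G A B) (hs : B' ⊆ B) :
    Dominates G A B' := fun x hx => h x (hs hx)

private lemma dom_union {A B C : Set V} (h1 : Dominates G A B) (h2 : Dominates G A C) :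
    Dominates G A (B ∪ C) := fun x hx => hx.elim (h1 x) (h2 x)

private lemma udp_tot {k : ℕ} {P : Fin k → Set V} (hP : IsUpperDomaticPart G P) :
    ∀ i j, i ≠ j → Dominates G (P i) (P j) ∨ Dominates G (P j) (P i) := by
  intro i j hij
  rcases lt_or_gt_of_ne hij with h | h
  · exact hP.2 i j h
  · exact (hP.2 j i h).symm

private lemma fin5_cases (a b c d e x : Fin 5)
    (hab : a ≠ b) (hac : a ≠ c) (had : a ≠ d) (hae : a ≠ e)
    (hbc : b ≠ c) (hbd : b ≠ d) (hbe : b ≠ e)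
    (hcd : c ≠ d) (hce : c ≠ e) (hde : d ≠ e) :
    x = a ∨ x = b ∨ x = c ∨ x = d ∨ x = e := by
  revert hab hac had hae hbc hbd hbe hcd hce hde
  revert a b c d e x
  decide

private lemma exists_part [Fintype V] (G : SimpleGraph V)
    (h5 : upperDomaticNumber G = 5) :
    ∃ P : Fin 5 → Set V, IsUpperDomaticPart G P := by
  classical
  have hbdd : BddAbove {k | ∃ P : Fin k → Set V, IsUpperDomaticPart G P} := by
    refine ⟨Fintype.card V, fun k hk => ?_⟩
    obtain ⟨P, ⟨hne, hdisj, -⟩, -⟩ := hk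
    choose f hf using hne
    have hinj : Function.Injective f := by
      intro i j hij
      by_contra hne'
      exact Set.disjoint_left.mp (hdisj hne') (hf i) (hij ▸ hf j)
    calc k = Fintype.card (Fin k) := (Fintype.card_fin k).symm
      _ ≤ Fintype.card V := Fintype.card_le_of_injective f hinj
  have hne : {k | ∃ P : Fin k → Set V, IsUpperDomaticPart G P}.Nonempty := by
    by_contra h
    rw [Set.not_nonempty_iff_eq_empty] at h
    unfold upperDomaticNumber at h5
    rw [h, csSup_empty] at h5
    simp at h5
  have hmem := Nat.sSup_mem hne hbdd
  unfold upperDomaticNumber at h5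
  rw [h5] at hmem
  exact hmem

private lemma omove (P : Fin 5 → Set V)
    (hP : IsUpperDomaticPart G P) (a b : Fin 5) (hab : a ≠ b)
    (hba : ¬ Dominates G (P b) (P a))
    (hdom : ∀ m, m ≠ a → m ≠ b → Dominates G (P m) (P a)) :
    ∃ Q : Fin 5 → Set V, IsUpperDomaticPart G Q ∧
      ∃ i, ∀ m, m ≠ i → Dominates G (Q m) (Q i) := by
  classical
  have htot := udp_tot hP
  obtain ⟨hne, hdisj, huniv⟩ := hP.1
  have hab' : Dominates G (P a) (P b) := (htot a b hab).resolve_right hba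
  set W : Set V := {x | x ∈ P a ∧ ∀ y ∈ P b, ¬ G.Adj y x} with hWdef
  have hWa : W ⊆ P a := fun x hx => hx.1
  set Q : Fin 5 → Set V := fun m => if m = a then P a \ W
      else if m = b then P b ∪ W else P m with hQdef
  have hQa : Q a = P a \ W := by simp [hQdef]
  have hQb : Q b = P b ∪ W := by simp [hQdef, Ne.symm hab]
  have hQm : ∀ m, m ≠ a → m ≠ b → Q m = P m := by
    intro m h1 h2; simp [hQdef, h1, h2]
  have hQba : Dominates G (Q b) (Q a) := by
    rw [hQa, hQb]
    rintro x ⟨hxa, hxW⟩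
    have hex : ∃ y ∈ P b, G.Adj y x := by
      by_contra hcon
      push_neg at hcon
      exact hxW ⟨hxa, hcon⟩
    obtain ⟨y, hy, hadj⟩ := hex
    exact ⟨y, Or.inl hy, hadj⟩
  have hQma : ∀ m, m ≠ a → Dominates G (Q m) (Q a) := by
    intro m hma
    by_cases hmb : m = b
    · rw [hmb]; exact hQba
    · rw [hQa, hQm m hma hmb]
      exact dom_mono_right (hdom m hma hmb) Set.diff_subset
  have hQne : ∀ i, (Q i).Nonempty := by
    intro i
    by_cases hia : i = a
    · rw [hia, hQa]
      obtain ⟨y0, hy0⟩ := hne b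
      obtain ⟨x, hx, hadj⟩ := hab' y0 hy0
      exact ⟨x, hx, fun hxW => hxW.2 y0 hy0 hadj.symm⟩
    · by_cases hib : i = b
      · rw [hib, hQb]
        obtain ⟨y, hy⟩ := hne b
        exact ⟨y, Or.inl hy⟩
      · rw [hQm i hia hib]; exact hne i
  have hQsub : ∀ m, Q m ⊆ P m ∪ P a := by
    intro m
    by_cases hma : m = a
    · rw [hma, hQa]; exact fun x hx => Or.inl hx.1
    · by_cases hmb : m = b
      · rw [hmb, hQb]
        rintro x (hx | hx)
        · exact Or.inl hx
        · exact Or.inr (hWa hx)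
      · rw [hQm m hma hmb]; exact fun x hx => Or.inl hx
  have hQdisj : Pairwise fun i j => Disjoint (Q i) (Q j) := by
    have key : ∀ i j : Fin 5, i ≠ j → ∀ x, x ∈ Q i → x ∉ Q j := by
      intro i j hij x hxi hxj
      have hxi' := hQsub i hxi
      have hxj' := hQsub j hxj
      have hiPa : ∀ m : Fin 5, x ∈ Q m → x ∈ P a → m = a ∨ m = b := by
        intro m hxm hxPa
        by_contra hcon
        push_neg at hcon
        rw [hQm m hcon.1 hcon.2] at hxm
        exact Set.disjoint_left.mp (hdisj hcon.1) hxm hxPa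
      rcases hxi' with hxi' | hxia <;> rcases hxj' with hxj' | hxja
      · exact Set.disjoint_left.mp (hdisj hij) hxi' hxj'
      · -- x ∈ P i and x ∈ P a (from Q j)
        rcases hiPa j hxj hxja with hj | hj
        · -- j = a : then Q j = P a \ W ; and x ∈ P i : if i = a contradiction i≠j; i ≠ a so P i disj P a
          have hia : i ≠ a := fun h => hij (h.trans hj.symm)
          rw [hj, hQa] at hxj
          exact Set.disjoint_left.mp (hdisj hia) hxi' hxj.1
        · -- j = b : Q j = P b ∪ W ; x ∈ P i, x ∈ P a.
          have hib : i ≠ b := fun h => hij (h.trans hj.symm)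
          rw [hj, hQb] at hxj
          rcases hxj with hxj | hxj
          · exact Set.disjoint_left.mp (hdisj hib) hxi' hxj
          · -- x ∈ W ⊆ P a, x ∈ P i, need i ≠ a :
            by_cases hia : i = a
            · rw [hia, hQa] at hxi
              exact hxi.2 hxj
            · exact Set.disjoint_left.mp (hdisj hia) hxi' (hWa hxj)
      · rcases hiPa i hxi hxia with hi | hi
        · have hja : j ≠ a := fun h => hij (hi.trans h.symm)
          rw [hi, hQa] at hxi
          exact Set.disjoint_left.mp (hdisj hja) hxj' hxi.1
        · have hjb : j ≠ b := fun h => hij (hi.trans h.symm)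
          rw [hi, hQb] at hxi
          rcases hxi with hxi | hxi
          · exact Set.disjoint_left.mp (hdisj hjb) hxj' hxi
          · by_cases hja : j = a
            · rw [hja, hQa] at hxj
              exact hxj.2 hxi
            · exact Set.disjoint_left.mp (hdisj hja) hxj' (hWa hxi)
      · rcases hiPa i hxi hxia with hi | hi <;> rcases hiPa j hxj hxja with hj | hj
        · exact hij (hi.trans hj.symm)
        · rw [hi, hQa] at hxi
          rw [hj, hQb] at hxj
          rcases hxj with hxj | hxj
          · exact Set.disjoint_left.mp (hdisj hab) hxi.1 hxj
          · exact hxi.2 hxj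
        · rw [hi, hQb] at hxi
          rw [hj, hQa] at hxj
          rcases hxi with hxi | hxi
          · exact Set.disjoint_left.mp (hdisj hab) hxj.1 hxi
          · exact hxj.2 hxi
        · exact hij (hi.trans hj.symm)
    intro i j hij
    exact Set.disjoint_left.mpr (fun {x} hx => key i j hij x hx)
  have hQuniv : (⋃ i, Q i) = Set.univ := by
    apply Set.eq_univ_iff_forall.mpr
    intro x
    have hx : x ∈ ⋃ i, P i := by rw [huniv]; trivial
    obtain ⟨n, hn⟩ := Set.mem_iUnion.mp hx
    by_cases hna : n = a
    · by_cases hxW : x ∈ W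
      · exact Set.mem_iUnion.mpr ⟨b, by rw [hQb]; exact Or.inr hxW⟩
      · refine Set.mem_iUnion.mpr ⟨a, by rw [hQa]; exact ⟨hna ▸ hn, hxW⟩⟩
    · by_cases hnb : n = b
      · exact Set.mem_iUnion.mpr ⟨b, by rw [hQb]; exact Or.inl (hnb ▸ hn)⟩
      · exact Set.mem_iUnion.mpr ⟨n, by rw [hQm n hna hnb]; exact hn⟩
  have key2 : ∀ i j : Fin 5, i ≠ j →
      Dominates G (Q i) (Q j) ∨ Dominates G (Q j) (Q i) := by
    intro i j hij
    by_cases hja : j = a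
    · rw [hja]; exact Or.inl (hQma i (hja ▸ hij))
    · by_cases hia : i = a
      · rw [hia]; exact Or.inr (hQma j hja)
      · by_cases hib : i = b
        · have hjb : j ≠ b := fun h => hij (hib.trans h.symm)
          rcases htot b j hjb.symm with hbj | hjb'
          · left
            rw [hib, hQb, hQm j hja hjb]
            exact dom_mono_left hbj Set.subset_union_left
          · right
            rw [hib, hQb, hQm j hja hjb]
            exact dom_union hjb' (dom_mono_right (hdom j hja hjb) hWa)
        · by_cases hjb : j = b
          · rcases htot b i (fun h => hij (hjb.trans h).symm) with hbi | hib'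
            · right
              rw [hjb, hQb, hQm i hia hib]
              exact dom_mono_left hbi Set.subset_union_left
            · left
              rw [hjb, hQb, hQm i hia hib]
              exact dom_union hib' (dom_mono_right (hdom i hia hib) hWa)
          · rw [hQm i hia hib, hQm j hja hjb]
            exact htot i j hij
  exact ⟨Q, ⟨⟨hQne, hQdisj, hQuniv⟩, fun i j hlt => key2 i j (ne_of_lt hlt)⟩,
    a, fun m hma => hQma m hma⟩

private lemma sinkmove (P : Fin 5 → Set V)
    (hP : IsUpperDomaticPart G P) (l : Fin 5 → Fin 5) (hl : Function.Injective l)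
    (h12 : Dominates G (P (l 1)) (P (l 2)))
    (h13 : Dominates G (P (l 1)) (P (l 3)))
    (h30 : Dominates G (P (l 3)) (P (l 0)))
    (h40 : Dominates G (P (l 4)) (P (l 0)))
    (h41 : Dominates G (P (l 4)) (P (l 1)))
    (b : V) (hb : b ∈ P (l 0))
    (hb2 : ∃ c ∈ P (l 2), G.Adj c b)
    (hb01 : ∃ y ∈ P (l 0) ∪ P (l 1), y ≠ b ∧ G.Adj y b) :
    ∃ Q : Fin 5 → Set V, IsUpperDomaticPart G Q ∧
      ∃ i, ∀ m, m ≠ i → Dominates G (Q m) (Q i) := by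
  classical
  have htot := udp_tot hP
  obtain ⟨hne, hdisj, huniv⟩ := hP.1
  have hlsurj : Function.Surjective l := Finite.surjective_of_injective hl
  set Q : Fin 5 → Set V := fun m => if m = 0 then {b}
      else if m = 1 then (P (l 0) \ {b}) ∪ P (l 1) else P (l m) with hQdef
  have hQ0 : Q 0 = {b} := rfl
  have hQ1 : Q 1 = (P (l 0) \ {b}) ∪ P (l 1) := rfl
  have hQ2 : Q 2 = P (l 2) := rfl
  have hQ3 : Q 3 = P (l 3) := rfl
  have hQ4 : Q 4 = P (l 4) := rfl
  -- dominating the singleton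
  have q01 : Dominates G (Q 1) (Q 0) := by
    rw [hQ0, hQ1]
    obtain ⟨y, hy, hyb, hadj⟩ := hb01
    intro z hz
    rw [Set.mem_singleton_iff] at hz
    rw [hz]
    rcases hy with hy | hy
    · exact ⟨y, Or.inl ⟨hy, hyb⟩, hadj⟩
    · exact ⟨y, Or.inr hy, hadj⟩
  have q02 : Dominates G (Q 2) (Q 0) := by
    rw [hQ0, hQ2]
    obtain ⟨c, hc, hadj⟩ := hb2
    intro z hz
    rw [Set.mem_singleton_iff] at hz
    rw [hz]
    exact ⟨c, hc, hadj⟩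
  have q03 : Dominates G (Q 3) (Q 0) := by
    rw [hQ0, hQ3]
    intro z hz
    rw [Set.mem_singleton_iff] at hz
    rw [hz]
    exact h30 b hb
  have q04 : Dominates G (Q 4) (Q 0) := by
    rw [hQ0, hQ4]
    intro z hz
    rw [Set.mem_singleton_iff] at hz
    rw [hz]
    exact h40 b hb
  have q12 : Dominates G (Q 1) (Q 2) := by
    rw [hQ1, hQ2]
    exact dom_mono_left h12 Set.subset_union_right
  have q13 : Dominates G (Q 1) (Q 3) := by
    rw [hQ1, hQ3]
    exact dom_mono_left h13 Set.subset_union_right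
  have q41 : Dominates G (Q 4) (Q 1) := by
    rw [hQ1, hQ4]
    rintro z (⟨hz, -⟩ | hz)
    · exact h40 z hz
    · exact h41 z hz
  have hlne : ∀ i j : Fin 5, i ≠ j → l i ≠ l j := fun i j h hh => h (hl hh)
  -- partitionness
  have hQne : ∀ i, (Q i).Nonempty := by
    intro i
    fin_cases i
    · exact ⟨b, rfl⟩
    · obtain ⟨y, hy⟩ := hne (l 1); exact ⟨y, Or.inr hy⟩
    · exact hne (l 2)
    · exact hne (l 3)
    · exact hne (l 4)
  have hQdisj : Pairwise fun i j => Disjoint (Q i) (Q j) := by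
    have d01 : Disjoint (Q 0) (Q 1) := by
      rw [hQ0, hQ1]
      rw [Set.disjoint_left]
      intro x hx
      rw [Set.mem_singleton_iff] at hx
      subst hx
      rintro (⟨-, hx2⟩ | hx)
      · exact hx2 rfl
      · exact Set.disjoint_left.mp (hdisj (hlne 0 1 (by decide))) hb hx
    have d0k : ∀ k : Fin 5, k ≠ 0 → k ≠ 1 → Disjoint (Q 0) (P (l k)) := by
      intro k h0 h1
      rw [hQ0, Set.disjoint_left]
      intro x hx
      rw [Set.mem_singleton_iff] at hx
      subst hx
      exact Set.disjoint_left.mp (hdisj (hlne 0 k (Ne.symm h0))) hb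
    have d1k : ∀ k : Fin 5, k ≠ 0 → k ≠ 1 → Disjoint (Q 1) (P (l k)) := by
      intro k h0 h1
      rw [hQ1, Set.disjoint_left]
      rintro x (⟨hx, -⟩ | hx)
      · exact Set.disjoint_left.mp (hdisj (hlne 0 k (Ne.symm h0))) hx
      · exact Set.disjoint_left.mp (hdisj (hlne 1 k (Ne.symm h1))) hx
    have dkk : ∀ k k' : Fin 5, k ≠ k' → Disjoint (P (l k)) (P (l k')) :=
      fun k k' h => hdisj (hlne k k' h)
    intro i j hij
    fin_cases i <;> fin_cases j <;>
      first
        | exact absurd rfl hij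
        | exact d01
        | exact d01.symm
        | exact d0k 2 (by decide) (by decide)
        | exact (d0k 2 (by decide) (by decide)).symm
        | exact d0k 3 (by decide) (by decide)
        | exact (d0k 3 (by decide) (by decide)).symm
        | exact d0k 4 (by decide) (by decide)
        | exact (d0k 4 (by decide) (by decide)).symm
        | exact d1k 2 (by decide) (by decide)
        | exact (d1k 2 (by decide) (by decide)).symm
        | exact d1k 3 (by decide) (by decide)
        | exact (d1k 3 (by decide) (by decide)).symm
        | exact d1k 4 (by decide) (by decide)
        | exact (d1k 4 (by decide) (by decide)).symm
        | exact dkk 2 3 (by decide)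
        | exact dkk 3 2 (by decide)
        | exact dkk 2 4 (by decide)
        | exact dkk 4 2 (by decide)
        | exact dkk 3 4 (by decide)
        | exact dkk 4 3 (by decide)
  have hQuniv : (⋃ i, Q i) = Set.univ := by
    apply Set.eq_univ_iff_forall.mpr
    intro x
    have hx : x ∈ ⋃ i, P i := by rw [huniv]; trivial
    obtain ⟨n, hn⟩ := Set.mem_iUnion.mp hx
    obtain ⟨k, hk⟩ := hlsurj n
    rw [← hk] at hn
    fin_cases k
    · by_cases hxb : x = b
      · exact Set.mem_iUnion.mpr ⟨0, by rw [hQ0]; exact hxb⟩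
      · exact Set.mem_iUnion.mpr ⟨1, by rw [hQ1]; exact Or.inl ⟨hn, hxb⟩⟩
    · exact Set.mem_iUnion.mpr ⟨1, by rw [hQ1]; exact Or.inr hn⟩
    · exact Set.mem_iUnion.mpr ⟨2, by rw [hQ2]; exact hn⟩
    · exact Set.mem_iUnion.mpr ⟨3, by rw [hQ3]; exact hn⟩
    · exact Set.mem_iUnion.mpr ⟨4, by rw [hQ4]; exact hn⟩
  have q23 := htot (l 2) (l 3) (hlne 2 3 (by decide))
  have q24 := htot (l 2) (l 4) (hlne 2 4 (by decide))
  have q34 := htot (l 3) (l 4) (hlne 3 4 (by decide))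
  refine ⟨Q, ⟨⟨hQne, hQdisj, hQuniv⟩, ?_⟩, 0, ?_⟩
  · intro i j hlt
    fin_cases i <;> fin_cases j <;>
      first
        | exact absurd hlt (by decide)
        | exact Or.inr q01
        | exact Or.inr q02
        | exact Or.inr q03
        | exact Or.inr q04
        | exact Or.inl q12
        | exact Or.inl q13
        | exact Or.inr q41
        | exact q23
        | exact q24
        | exact q34
  · intro m hm
    fin_cases m
    · exact absurd rfl hm
    · exact q01
    · exact q02
    · exact q03
    · exact q04

private lemma star_contra
    (hfree : ¬ ∃ a b c d : V, a ≠ b ∧ a ≠ c ∧ a ≠ d ∧ b ≠ c ∧ b ≠ d ∧ c ≠ d ∧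
      G.Adj a b ∧ G.Adj c d ∧ ¬ G.Adj a c ∧ ¬ G.Adj a d ∧ ¬ G.Adj b c ∧ ¬ G.Adj b d)
    (P : Fin 5 → Set V)
    (hne : ∀ i, (P i).Nonempty)
    (hdisj : Pairwise fun i j => Disjoint (P i) (P j))
    (l : Fin 5 → Fin 5) (hl : Function.Injective l)
    (h41 : Dominates G (P (l 4)) (P (l 1)))
    (h24 : Dominates G (P (l 2)) (P (l 4)))
    (h30 : Dominates G (P (l 3)) (P (l 0)))
    (h20 : ¬ Dominates G (P (l 2)) (P (l 0)))
    (star2 : ∀ b ∈ P (l 2), (∃ c ∈ P (l 4), G.Adj b c) →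
      ∀ y ∈ P (l 2) ∪ P (l 3), y ≠ b → ¬ G.Adj b y)
    (star3 : ∀ b ∈ P (l 3), (∃ c ∈ P (l 0), G.Adj b c) →
      ∀ y ∈ P (l 3) ∪ P (l 4), y ≠ b → ¬ G.Adj b y)
    (star4 : ∀ b ∈ P (l 4), (∃ c ∈ P (l 1), G.Adj b c) →
      ∀ y ∈ P (l 4) ∪ P (l 0), y ≠ b → ¬ G.Adj b y) : False := by
  have hlne : ∀ i j : Fin 5, i ≠ j → l i ≠ l j := fun i j h hh => h (hl hh)
  have hdne : ∀ (i j : Fin 5), i ≠ j → ∀ {x y : V}, x ∈ P (l i) → y ∈ P (l j) → x ≠ y := by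
    intro i j hij x y hx hy heq
    exact Set.disjoint_left.mp (hdisj (hlne i j hij)) hx (heq ▸ hy)
  -- the witness z of non-domination
  have hz : ∃ z ∈ P (l 0), ∀ c ∈ P (l 2), ¬ G.Adj c z := by
    by_contra hcon
    push_neg at hcon
    apply h20
    intro z hzm
    obtain ⟨c, hc, hadj⟩ := hcon z hzm
    exact ⟨c, hc, hadj⟩
  obtain ⟨z, hz0, hzadj⟩ := hz
  -- b' ∈ P (l 4) with a neighbour in P (l 1)
  obtain ⟨q, hq⟩ := hne (l 1)
  obtain ⟨b', hb'4, hb'q⟩ := h41 q hq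
  have hstar4 := star4 b' hb'4 ⟨q, hq, hb'q⟩
  -- b ∈ P (l 2) adjacent to b'
  obtain ⟨bb, hbb2, hbbadj⟩ := h24 b' hb'4
  have hstar2 := star2 bb hbb2 ⟨b', hb'4, hbbadj⟩
  -- u ∈ P (l 3) adjacent to z
  obtain ⟨u, hu3, huz⟩ := h30 z hz0
  have hstar3 := star3 u hu3 ⟨z, hz0, huz⟩
  -- assemble the 2K2
  apply hfree
  refine ⟨bb, b', u, z, ?_, ?_, ?_, ?_, ?_, ?_, hbbadj, huz, ?_, ?_, ?_, ?_⟩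
  · exact hdne 2 4 (by decide) hbb2 hb'4
  · exact hdne 2 3 (by decide) hbb2 hu3
  · exact hdne 2 0 (by decide) hbb2 hz0
  · exact hdne 4 3 (by decide) hb'4 hu3
  · exact hdne 4 0 (by decide) hb'4 hz0
  · exact hdne 3 0 (by decide) hu3 hz0
  · exact hstar2 u (Or.inr hu3) (hdne 3 2 (by decide) hu3 hbb2)
  · exact hzadj bb hbb2
  · exact fun h => hstar3 b' (Or.inr hb'4) (hdne 4 3 (by decide) hb'4 hu3) h.symm
  · exact hstar4 z (Or.inr hz0) (hdne 0 4 (by decide) hz0 hb'4)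

private lemma inj5 {α : Type*} {a b c d e : α}
    (hab : a ≠ b) (hac : a ≠ c) (had : a ≠ d) (hae : a ≠ e) (hbc : b ≠ c)
    (hbd : b ≠ d) (hbe : b ≠ e) (hcd : c ≠ d) (hce : c ≠ e) (hde : d ≠ e) :
    Function.Injective (fun i : Fin 5 => if i = 0 then a else if i = 1 then b
      else if i = 2 then c else if i = 3 then d else e) := by
  intro i j hij
  fin_cases i <;> fin_cases j <;> simp_all

private lemma classify (r : Fin 5 → Fin 5 → Prop)
    (htot : ∀ i j, i ≠ j → r i j ∨ r j i)
    (h3 : ∀ i, ¬ ∃ j k m, j ≠ k ∧ j ≠ m ∧ k ≠ m ∧ j ≠ i ∧ k ≠ i ∧ m ≠ i ∧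
      r j i ∧ r k i ∧ r m i) :
    ∃ e : Fin 5 → Fin 5, Function.Injective e ∧
      r (e 0) (e 1) ∧ r (e 1) (e 2) ∧ r (e 2) (e 3) ∧ r (e 3) (e 4) ∧ r (e 4) (e 0) ∧
      r (e 0) (e 2) ∧ r (e 1) (e 3) ∧ r (e 2) (e 4) ∧ r (e 3) (e 0) ∧ r (e 4) (e 1) ∧
      ¬ r (e 2) (e 0) := by
  classical
  set din : Fin 5 → Finset (Fin 5) :=
    fun i => Finset.univ.filter (fun j => j ≠ i ∧ r j i) with hdin_def
  have hdin_mem : ∀ i j, j ∈ din i ↔ (j ≠ i ∧ r j i) := by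
    intro i j; simp [hdin_def]
  have hdin2 : ∀ i, (din i).card ≤ 2 := by
    intro i
    by_contra hcon
    push_neg at hcon
    obtain ⟨t, hts, htc⟩ := Finset.exists_subset_card_eq hcon
    obtain ⟨x, y, w, hxy, hxw, hyw, ht⟩ := Finset.card_eq_three.mp htc
    have hx := (hdin_mem i x).mp (hts (ht ▸ by simp))
    have hy := (hdin_mem i y).mp (hts (ht ▸ by simp))
    have hw := (hdin_mem i w).mp (hts (ht ▸ by simp))
    exact h3 i ⟨x, y, w, hxy, hxw, hyw, hx.1, hy.1, hw.1, hx.2, hy.2, hw.2⟩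
  set S : Finset (Fin 5 × Fin 5) :=
    Finset.univ.filter (fun p => p.1 ≠ p.2 ∧ r p.1 p.2) with hS_def
  have hS_mem : ∀ p : Fin 5 × Fin 5, p ∈ S ↔ (p.1 ≠ p.2 ∧ r p.1 p.2) := by
    intro p; simp [hS_def]
  -- S as a disjoint union over second coordinates
  have hSeq : S = Finset.univ.biUnion (fun i => (din i).image (fun j => (j, i))) := by
    ext p
    simp only [Finset.mem_biUnion, Finset.mem_univ, true_and, Finset.mem_image]
    rw [hS_mem]
    constructor
    · rintro ⟨hne, hr⟩
      exact ⟨p.2, p.1, (hdin_mem p.2 p.1).mpr ⟨hne, hr⟩, rfl⟩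
    · rintro ⟨i, j, hj, rfl⟩
      have := (hdin_mem i j).mp hj
      exact ⟨this.1, this.2⟩
  have hcard_sum : S.card = ∑ i, (din i).card := by
    rw [hSeq, Finset.card_biUnion]
    · apply Finset.sum_congr rfl
      intro i _
      exact Finset.card_image_of_injective _ (fun x y h => (Prod.mk.injEq _ _ _ _).mp h |>.1)
    · intro x _ y _ hxy
      rw [Function.onFun, Finset.disjoint_left]
      intro p hp hp2
      simp only [Finset.mem_image] at hp hp2
      obtain ⟨j, -, rfl⟩ := hp
      obtain ⟨j', -, h⟩ := hp2
      exact hxy ((Prod.mk.injEq _ _ _ _).mp h |>.2.symm ▸ rfl)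
  have hSle : S.card ≤ 10 := by
    rw [hcard_sum]
    calc ∑ i, (din i).card ≤ ∑ _i : Fin 5, 2 := Finset.sum_le_sum (fun i _ => hdin2 i)
      _ = 10 := by simp
  -- lower bound via the injection from unordered pairs
  set T : Finset (Fin 5 × Fin 5) :=
    Finset.univ.filter (fun p => p.1 < p.2) with hT_def
  have hT_card : T.card = 10 := by decide
  set g : Fin 5 × Fin 5 → Fin 5 × Fin 5 := fun p => if r p.1 p.2 then p else p.swap with hg_def
  have hg_mapsto : ∀ p ∈ T, g p ∈ S := by
    intro p hp
    have hlt : p.1 < p.2 := by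
      have := Finset.mem_filter.mp hp; exact this.2
    by_cases hr : r p.1 p.2
    · rw [hS_mem]
      simp only [hg_def, if_pos hr]
      exact ⟨ne_of_lt hlt, hr⟩
    · have hr' : r p.2 p.1 := (htot p.1 p.2 (ne_of_lt hlt)).resolve_left hr
      rw [hS_mem]
      simp only [hg_def, if_neg hr]
      exact ⟨ne_of_gt hlt, hr'⟩
  have hg_inj : Set.InjOn g T := by
    intro p hp q hq hpq
    have hltp : p.1 < p.2 := (Finset.mem_filter.mp hp).2
    have hltq : q.1 < q.2 := (Finset.mem_filter.mp hq).2
    by_cases hrp : r p.1 p.2 <;> by_cases hrq : r q.1 q.2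
    · simpa [hg_def, hrp, hrq] using hpq
    · exfalso
      simp only [hg_def, if_pos hrp, if_neg hrq] at hpq
      have h1 : p.1 = q.2 := by rw [hpq]; rfl
      have h2 : p.2 = q.1 := by rw [hpq]; rfl
      rw [h1, h2] at hltp
      exact absurd hltp (asymm hltq)
    · exfalso
      simp only [hg_def, if_neg hrp, if_pos hrq] at hpq
      have h1 : p.2 = q.1 := congrArg Prod.fst hpq
      have h2 : p.1 = q.2 := congrArg Prod.snd hpq
      rw [← h1, ← h2] at hltq
      exact absurd hltq (asymm hltp)
    · simp only [hg_def, if_neg hrp, if_neg hrq] at hpq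
      have := congrArg Prod.swap hpq
      simpa using this
  have hSge : 10 ≤ S.card := by
    rw [← hT_card]
    exact Finset.card_le_card_of_injOn g hg_mapsto hg_inj
  have hScard : S.card = 10 := le_antisymm hSle hSge
  -- every in-degree is exactly 2
  have hdin_eq : ∀ i, (din i).card = 2 := by
    intro i
    have hsum : ∑ j, (din j).card = 10 := by rw [← hcard_sum]; exact hScard
    have herase : ∑ j ∈ Finset.univ.erase i, (din j).card + (din i).card
        = ∑ j, (din j).card := Finset.sum_erase_add _ _ (Finset.mem_univ i)
    have hbound : ∑ j ∈ Finset.univ.erase i, (din j).card ≤ 8 := by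
      calc ∑ j ∈ Finset.univ.erase i, (din j).card
          ≤ (Finset.univ.erase i).card • 2 :=
            Finset.sum_le_card_nsmul _ _ 2 (fun j _ => hdin2 j)
        _ = 8 := by rw [Finset.card_erase_of_mem (Finset.mem_univ i)]; simp
    have := hdin2 i
    omega
  -- strictness
  have himg : T.image g = S := by
    apply Finset.eq_of_subset_of_card_le
    · intro p hp
      obtain ⟨q, hq, rfl⟩ := Finset.mem_image.mp hp
      exact hg_mapsto q hq
    · rw [Finset.card_image_of_injOn hg_inj, hT_card, hScard]
  have hstrict : ∀ i j, i ≠ j → r i j → ¬ r j i := by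
    have key : ∀ i j : Fin 5, i < j → r i j → r j i → False := by
      intro i j hlt hij hji
      have hmem : (j, i) ∈ S := (hS_mem (j, i)).mpr ⟨ne_of_gt hlt, hji⟩
      rw [← himg] at hmem
      obtain ⟨q, hqT, hq⟩ := Finset.mem_image.mp hmem
      have hltq : q.1 < q.2 := (Finset.mem_filter.mp hqT).2
      by_cases hrq : r q.1 q.2
      · simp only [hg_def, if_pos hrq] at hq
        rw [hq] at hltq
        exact absurd hltq (asymm hlt)
      · simp only [hg_def, if_neg hrq] at hq
        have h1 : q.2 = j := congrArg Prod.fst hq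
        have h2 : q.1 = i := congrArg Prod.snd hq
        rw [h1, h2] at hrq
        exact hrq hij
    intro i j hij hrij hrji
    rcases lt_or_gt_of_ne hij with h | h
    · exact key i j h hrij hrji
    · exact key j i h hrji hrij
  -- out-sets
  set dout : Fin 5 → Finset (Fin 5) :=
    fun i => Finset.univ.filter (fun j => j ≠ i ∧ r i j) with hdout_def
  have hdout_mem : ∀ i j, j ∈ dout i ↔ (j ≠ i ∧ r i j) := by
    intro i j; simp [hdout_def]
  have hdout_eq : ∀ i, (dout i).card = 2 := by
    intro i
    have hdisj : Disjoint (din i) (dout i) := by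
      rw [Finset.disjoint_left]
      intro j hj hj'
      have h1 := (hdin_mem i j).mp hj
      have h2 := (hdout_mem i j).mp hj'
      exact hstrict j i h1.1 h1.2 h2.2
    have hunion : din i ∪ dout i = Finset.univ.erase i := by
      ext j
      rw [Finset.mem_union, hdin_mem, hdout_mem, Finset.mem_erase]
      constructor
      · rintro (⟨h1, -⟩ | ⟨h1, -⟩) <;> exact ⟨h1, Finset.mem_univ j⟩
      · rintro ⟨h1, -⟩
        rcases htot j i h1 with h | h
        · exact Or.inl ⟨h1, h⟩
        · exact Or.inr ⟨h1, h⟩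
    have hcard : (din i).card + (dout i).card = 4 := by
      rw [← Finset.card_union_of_disjoint hdisj, hunion,
        Finset.card_erase_of_mem (Finset.mem_univ i)]
      simp
    have := hdin_eq i
    omega
  -- helper to flip non-membership
  have hout_flip : ∀ i j, j ≠ i → j ∉ din i → r i j := by
    intro i j h1 h2
    rw [hdin_mem] at h2
    push_neg at h2
    exact (htot i j (Ne.symm h1)).resolve_right (fun h => h2 h1 h)
  have hin_flip : ∀ i j, j ≠ i → j ∉ dout i → r j i := by
    intro i j h1 h2
    rw [hdout_mem] at h2
    push_neg at h2
    exact (htot j i h1).resolve_right (fun h => h2 h1 h)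
  -- now the structural extraction ; the core is a function of five labelled vertices
  have core : ∀ A B E C D : Fin 5,
      A ≠ B → A ≠ E → A ≠ C → A ≠ D → B ≠ E → B ≠ C → B ≠ D → E ≠ C → E ≠ D → C ≠ D →
      r A B → r A E → r B E → r C A → r D A →
      ∃ e : Fin 5 → Fin 5, Function.Injective e ∧
        r (e 0) (e 1) ∧ r (e 1) (e 2) ∧ r (e 2) (e 3) ∧ r (e 3) (e 4) ∧ r (e 4) (e 0) ∧
        r (e 0) (e 2) ∧ r (e 1) (e 3) ∧ r (e 2) (e 4) ∧ r (e 3) (e 0) ∧ r (e 4) (e 1) ∧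
        ¬ r (e 2) (e 0) := by
    intro A B E C D hAB hAE hAC hAD hBE hBC hBD hEC hED hCD rAB rAE rBE rCA rDA
    -- din E = {A, B}
    have hdinE : ({A, B} : Finset (Fin 5)) = din E := by
      apply Finset.eq_of_subset_of_card_le
      · intro x hx
        rcases Finset.mem_insert.mp hx with h | h
        · rw [h, hdin_mem]; exact ⟨hAE, rAE⟩
        · rw [Finset.mem_singleton.mp h, hdin_mem]; exact ⟨hBE, rBE⟩
      · rw [hdin_eq E, Finset.card_pair hAB]
    have rEC : r E C := by
      apply hout_flip E C (Ne.symm hEC)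
      rw [← hdinE]
      simp only [Finset.mem_insert, Finset.mem_singleton]
      push_neg
      exact ⟨Ne.symm hAC, Ne.symm hBC⟩
    have rED : r E D := by
      apply hout_flip E D (Ne.symm hED)
      rw [← hdinE]
      simp only [Finset.mem_insert, Finset.mem_singleton]
      push_neg
      exact ⟨Ne.symm hAD, Ne.symm hBD⟩
    -- din B = {A, x'} for some x' ∈ {C, D}
    obtain ⟨x, y, hxy, hB⟩ := Finset.card_eq_two.mp (hdin_eq B)
    have hAmem : A ∈ din B := (hdin_mem B A).mpr ⟨hAB, rAB⟩
    have hAxy : A = x ∨ A = y := by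
      rw [hB] at hAmem
      simpa using hAmem
    -- extract the partner x'
    obtain ⟨x', hx'A, hdinB⟩ : ∃ x', x' ≠ A ∧ din B = {A, x'} := by
      rcases hAxy with h | h
      · exact ⟨y, fun hc => hxy (h ▸ hc.symm), by rw [hB, ← h]⟩
      · refine ⟨x, fun hc => hxy (h ▸ hc), by rw [hB, ← h, Finset.pair_comm]⟩
    have hx'mem : x' ∈ din B := by rw [hdinB]; simp
    have hx'B := (hdin_mem B x').mp hx'mem
    have hx'E : x' ≠ E := by
      intro h
      exact hstrict B E hBE rBE (h ▸ hx'B.2)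
    have hx'CD : x' = C ∨ x' = D := by
      rcases fin5_cases A B E C D x' hAB hAE hAC hAD hBE hBC hBD hEC hED hCD with
        h | h | h | h | h
      · exact absurd h hx'A
      · exact absurd h hx'B.1
      · exact absurd h hx'E
      · exact Or.inl h
      · exact Or.inr h
    rcases hx'CD with hx'C | hx'D
    · -- x' = C beats B ; D is beaten by B
      have rCB : r C B := hx'C ▸ hx'B.2
      have rBD : r B D := by
        apply hout_flip B D (Ne.symm hBD)
        rw [hdinB, hx'C]
        simp only [Finset.mem_insert, Finset.mem_singleton]
        push_neg
        exact ⟨Ne.symm hAD, Ne.symm hCD⟩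
      have hdoutC : ({A, B} : Finset (Fin 5)) = dout C := by
        apply Finset.eq_of_subset_of_card_le
        · intro w hw
          rcases Finset.mem_insert.mp hw with h | h
          · rw [h, hdout_mem]; exact ⟨hAC, rCA⟩
          · rw [Finset.mem_singleton.mp h, hdout_mem]; exact ⟨hBC, rCB⟩
        · rw [hdout_eq C, Finset.card_pair hAB]
      have rDC : r D C := by
        apply hin_flip C D (Ne.symm hCD)
        rw [← hdoutC]
        simp only [Finset.mem_insert, Finset.mem_singleton]
        push_neg
        exact ⟨Ne.symm hAD, Ne.symm hBD⟩
      exact ⟨fun i => if i = 0 then A else if i = 1 then B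
        else if i = 2 then E else if i = 3 then D else C,
        inj5 hAB hAE hAD hAC hBE hBD hBC hED hEC (Ne.symm hCD),
        rAB, rBE, rED, rDC, rCA, rAE, rBD, rEC, rDA, rCB,
        fun h => hstrict A E hAE rAE h⟩
    · -- x' = D is the in-neighbour of B ; C is beaten by B
      have rDB : r D B := hx'D ▸ hx'B.2
      have rBC : r B C := by
        apply hout_flip B C (Ne.symm hBC)
        rw [hdinB, hx'D]
        simp only [Finset.mem_insert, Finset.mem_singleton]
        push_neg
        exact ⟨Ne.symm hAC, hCD⟩
      have hdoutD : ({A, B} : Finset (Fin 5)) = dout D := by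
        apply Finset.eq_of_subset_of_card_le
        · intro w hw
          rcases Finset.mem_insert.mp hw with h | h
          · rw [h, hdout_mem]; exact ⟨hAD, rDA⟩
          · rw [Finset.mem_singleton.mp h, hdout_mem]; exact ⟨hBD, rDB⟩
        · rw [hdout_eq D, Finset.card_pair hAB]
      have rCD : r C D := by
        apply hin_flip D C hCD
        rw [← hdoutD]
        simp only [Finset.mem_insert, Finset.mem_singleton]
        push_neg
        exact ⟨Ne.symm hAC, Ne.symm hBC⟩
      exact ⟨fun i => if i = 0 then A else if i = 1 then B
        else if i = 2 then E else if i = 3 then C else D,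
        inj5 hAB hAE hAC hAD hBE hBC hBD hEC hED hCD,
        rAB, rBE, rEC, rCD, rDA, rAE, rBC, rED, rCA, rDB,
        fun h => hstrict A E hAE rAE h⟩
  -- outer assembly
  obtain ⟨B, E0, hBE0, hdout0⟩ := Finset.card_eq_two.mp (hdout_eq 0)
  obtain ⟨C, D, hCD0, hdin0⟩ := Finset.card_eq_two.mp (hdin_eq 0)
  have hBmem : B ∈ dout 0 := by rw [hdout0]; simp
  have hEmem : E0 ∈ dout 0 := by rw [hdout0]; simp
  have hCmem : C ∈ din 0 := by rw [hdin0]; simp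
  have hDmem : D ∈ din 0 := by rw [hdin0]; simp
  have hB := (hdout_mem 0 B).mp hBmem
  have hE := (hdout_mem 0 E0).mp hEmem
  have hC := (hdin_mem 0 C).mp hCmem
  have hD := (hdin_mem 0 D).mp hDmem
  have hdisj0 : ∀ x, x ∈ dout 0 → x ∈ din 0 → False := by
    intro x hx1 hx2
    have h1 := (hdout_mem 0 x).mp hx1
    have h2 := (hdin_mem 0 x).mp hx2
    exact hstrict 0 x (Ne.symm h1.1) h1.2 h2.2
  have hBC : B ≠ C := fun h => hdisj0 B hBmem (h ▸ hCmem)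
  have hBD : B ≠ D := fun h => hdisj0 B hBmem (h ▸ hDmem)
  have hEC : E0 ≠ C := fun h => hdisj0 E0 hEmem (h ▸ hCmem)
  have hED : E0 ≠ D := fun h => hdisj0 E0 hEmem (h ▸ hDmem)
  rcases htot B E0 hBE0 with h | h
  · exact core 0 B E0 C D (Ne.symm hB.1) (Ne.symm hE.1) (Ne.symm hC.1) (Ne.symm hD.1)
      hBE0 hBC hBD hEC hED hCD0 hB.2 hE.2 h hC.2 hD.2
  · exact core 0 E0 B C D (Ne.symm hE.1) (Ne.symm hB.1) (Ne.symm hC.1) (Ne.symm hD.1)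
      (Ne.symm hBE0) hEC hED hBC hBD hCD0 hE.2 hB.2 h hC.2 hD.2

end aux

/-- A `2K₂`-free graph `G` with `D(G) = 5` has a `D`-partition
containing a sink set. -/
theorem twoK2Free_D5_sinkSet [Fintype V] (G : SimpleGraph V)
    (hfree : ¬ ∃ a b c d : V, a ≠ b ∧ a ≠ c ∧ a ≠ d ∧ b ≠ c ∧ b ≠ d ∧ c ≠ d ∧
      G.Adj a b ∧ G.Adj c d ∧ ¬ G.Adj a c ∧ ¬ G.Adj a d ∧ ¬ G.Adj b c ∧ ¬ G.Adj b d)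
    (h5 : upperDomaticNumber G = 5) :
    ∃ P : Fin 5 → Set V, IsUpperDomaticPart G P ∧
      ∃ i, ∀ m, m ≠ i → Dominates G (P m) (P i) := by
  classical
  obtain ⟨P, hP⟩ := exists_part G h5
  have htot := udp_tot hP
  obtain ⟨hne, hdisj, huniv⟩ := hP.1
  by_cases hsink : ∃ i, ∀ m, m ≠ i → Dominates G (P m) (P i)
  · exact ⟨P, hP, hsink⟩
  push_neg at hsink
  -- hsink : ∀ i, ∃ m, m ≠ i ∧ ¬ Dominates G (P m) (P i)
  by_cases h3 : ∃ i j k m, j ≠ k ∧ j ≠ m ∧ k ≠ m ∧ j ≠ i ∧ k ≠ i ∧ m ≠ i ∧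
      Dominates G (P j) (P i) ∧ Dominates G (P k) (P i) ∧ Dominates G (P m) (P i)
  · -- some part has at least three dominators : use the O-move
    obtain ⟨i, j, k, m, hjk, hjm, hkm, hji, hki, hmi, hdj, hdk, hdm⟩ := h3
    obtain ⟨b, hbi, hnb⟩ := hsink i
    have hbj : b ≠ j := fun h => hnb (h ▸ hdj)
    have hbk : b ≠ k := fun h => hnb (h ▸ hdk)
    have hbm : b ≠ m := fun h => hnb (h ▸ hdm)
    apply omove P hP i b (Ne.symm hbi) hnb
    intro n hni hnb'
    rcases fin5_cases i b j k m n (Ne.symm hbi) (Ne.symm hji) (Ne.symm hki)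
        (Ne.symm hmi) hbj hbk hbm hjk hjm hkm with h | h | h | h | h
    · exact absurd h hni
    · exact absurd h hnb'
    · exact h ▸ hdj
    · exact h ▸ hdk
    · exact h ▸ hdm
  · -- no part has three dominators : classify the domination digraph
    push_neg at h3
    have h3' : ∀ i, ¬ ∃ j k m, j ≠ k ∧ j ≠ m ∧ k ≠ m ∧ j ≠ i ∧ k ≠ i ∧ m ≠ i ∧
        Dominates G (P j) (P i) ∧ Dominates G (P k) (P i) ∧ Dominates G (P m) (P i) := by
      intro i hcon
      obtain ⟨j, k, m, h1, h2, h4, h5', h6, h7, h8, h9, h10⟩ := hcon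
      exact h3 i j k m h1 h2 h4 h5' h6 h7 h8 h9 h10
    obtain ⟨e, he, r01, r12, r23, r34, r40, r02, r13, r24, r30, r41, rn20⟩ :=
      classify (fun i j => Dominates G (P i) (P j)) htot h3'
    -- the three structural conditions ; if any fails we get a sink partition
    by_cases s2 : ∃ b ∈ P (e 2), (∃ c ∈ P (e 4), G.Adj b c) ∧
        ∃ y ∈ P (e 2) ∪ P (e 3), y ≠ b ∧ G.Adj b y
    · obtain ⟨b, hb, ⟨c, hc, hbc⟩, y, hy, hyb, hby⟩ := s2
      exact sinkmove P hP (fun k => e (2 + k))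
        (he.comp (add_right_injective 2)) r34 r30 r02 r12 r13 b hb
        ⟨c, hc, hbc.symm⟩ ⟨y, hy, hyb, hby.symm⟩
    · by_cases s3 : ∃ b ∈ P (e 3), (∃ c ∈ P (e 0), G.Adj b c) ∧
          ∃ y ∈ P (e 3) ∪ P (e 4), y ≠ b ∧ G.Adj b y
      · obtain ⟨b, hb, ⟨c, hc, hbc⟩, y, hy, hyb, hby⟩ := s3
        exact sinkmove P hP (fun k => e (3 + k))
          (he.comp (add_right_injective 3)) r40 r41 r13 r23 r24 b hb
          ⟨c, hc, hbc.symm⟩ ⟨y, hy, hyb, hby.symm⟩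
      · by_cases s4 : ∃ b ∈ P (e 4), (∃ c ∈ P (e 1), G.Adj b c) ∧
            ∃ y ∈ P (e 4) ∪ P (e 0), y ≠ b ∧ G.Adj b y
        · obtain ⟨b, hb, ⟨c, hc, hbc⟩, y, hy, hyb, hby⟩ := s4
          exact sinkmove P hP (fun k => e (4 + k))
            (he.comp (add_right_injective 4)) (by exact r01) (by exact r02)
            (by exact r24) (by exact r34) (by exact r30) b hb
            ⟨c, hc, hbc.symm⟩ ⟨y, hy, hyb, hby.symm⟩
        · -- all three conditions hold : contradiction with 2K2-freeness
          exfalso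
          apply star_contra hfree P hne hdisj e he r41 r24 r30 rn20
          · intro b hb hc y hy hyb hadj
            exact s2 ⟨b, hb, hc, y, hy, hyb, hadj⟩
          · intro b hb hc y hy hyb hadj
            exact s3 ⟨b, hb, hc, y, hy, hyb, hadj⟩
          · intro b hb hc y hy hyb hadj
            exact s4 ⟨b, hb, hc, y, hy, hyb, hadj⟩
end

section
/- Let G be a graph with D(G) = 6. Then there exists a D-partition π = {V_1, …, V_6} of G that contains a set which is dominated by at least 3 of the other sets. -/
variable {V : Type*}

/-- A graph `G` with `D(G) = 6` has a `D`-partition containing a set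
dominated by at least `3` of the other sets. -/
theorem D6_exists_set_dominated_by_three [Fintype V] (G : SimpleGraph V)
    (h6 : upperDomaticNumber G = 6) :
    ∃ P : Fin 6 → Set V, IsUpperDomaticPart G P ∧
      ∃ j i1 i2 i3 : Fin 6, i1 ≠ j ∧ i2 ≠ j ∧ i3 ≠ j ∧ i1 ≠ i2 ∧ i1 ≠ i3 ∧ i2 ≠ i3 ∧
        Dominates G (P i1) (P j) ∧ Dominates G (P i2) (P j) ∧ Dominates G (P i3) (P j) := by
  classical
  -- extract a partition of size 6
  have hmem : 6 ∈ {k | ∃ P : Fin k → Set V, IsUpperDomaticPart G P} := by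
    have hne : {k | ∃ P : Fin k → Set V, IsUpperDomaticPart G P}.Nonempty := by
      by_contra h
      rw [Set.not_nonempty_iff_eq_empty] at h
      rw [upperDomaticNumber, h, csSup_empty] at h6
      simp at h6
    have hbdd : BddAbove {k | ∃ P : Fin k → Set V, IsUpperDomaticPart G P} := by
      by_contra h
      rw [upperDomaticNumber, csSup_of_not_bddAbove h] at h6
      simp at h6
    have := Nat.sSup_mem hne hbdd
    rwa [← upperDomaticNumber, h6] at this
  obtain ⟨P, hP⟩ := hmem
  refine ⟨P, hP, ?_⟩
  -- counting argument
  set T : Finset (Fin 6 × Fin 6) :=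
    Finset.univ.filter (fun p => p.1 ≠ p.2 ∧ Dominates G (P p.1) (P p.2)) with hT
  set S : Finset (Fin 6 × Fin 6) := Finset.univ.filter (fun p => p.1 < p.2) with hS
  have hScard : S.card = 15 := by rw [hS]; decide
  -- injection from S into T
  have hTcard : 15 ≤ T.card := by
    rw [← hScard]
    apply Finset.card_le_card_of_injOn
      (fun p => if Dominates G (P p.1) (P p.2) then p else p.swap)
    · intro p hp
      rw [hS, Finset.mem_coe, Finset.mem_filter] at hp
      rcases hP.2 p.1 p.2 hp.2 with h | h
      · simp [hT, h, ne_of_lt hp.2]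
      · by_cases h' : Dominates G (P p.1) (P p.2)
        · simp [hT, h', ne_of_lt hp.2]
        · simp [hT, h', h, Prod.swap, (ne_of_lt hp.2).symm]
    · intro p hp q hq hpq
      simp only [hS, Finset.coe_filter, Set.mem_setOf_eq] at hp hq
      dsimp only at hpq
      split_ifs at hpq with h1 h2 h2
      · exact hpq
      · exfalso
        have : p.1 < p.2 := hp.2
        rw [hpq] at this
        exact absurd (hq.2.trans this) (lt_irrefl _)
      · exfalso
        have : q.1 < q.2 := hq.2
        rw [← hpq] at this
        exact absurd (hp.2.trans this) (lt_irrefl _)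
      · exact Prod.swap_injective hpq
  -- fiberwise count over second coordinate
  have hfib : T.card = ∑ j : Fin 6,
      (Finset.univ.filter (fun i : Fin 6 => i ≠ j ∧ Dominates G (P i) (P j))).card := by
    rw [Finset.card_eq_sum_card_fiberwise (f := fun p => p.2) (t := Finset.univ)
      (fun p _ => Finset.mem_univ _)]
    refine Finset.sum_congr rfl fun j _ => ?_
    apply Finset.card_bij (fun p _ => p.1)
    · intro p hp
      rw [Finset.mem_filter, hT, Finset.mem_filter] at hp
      obtain ⟨⟨_, hne, hdom⟩, hj⟩ := hp
      subst hj
      simp [hne, hdom]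
    · intro p hp q hq h
      rw [Finset.mem_filter] at hp hq
      exact Prod.ext h (hp.2.trans hq.2.symm)
    · intro i hi
      rw [Finset.mem_filter] at hi
      exact ⟨(i, j), by simp [hT, hi.2.1, hi.2.2], rfl⟩
  -- pigeonhole: some j has fiber card ≥ 3
  have hex : ∃ j : Fin 6, 2 <
      (Finset.univ.filter (fun i : Fin 6 => i ≠ j ∧ Dominates G (P i) (P j))).card := by
    by_contra h
    push_neg at h
    have : T.card ≤ ∑ _j : Fin 6, 2 := by
      rw [hfib]; exact Finset.sum_le_sum fun j _ => h j
    simp at this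
    omega
  obtain ⟨j, hj⟩ := hex
  obtain ⟨t, hts, htc⟩ := Finset.exists_subset_card_eq hj
  obtain ⟨a, b, c, hab, hac, hbc, rfl⟩ := Finset.card_eq_three.mp htc
  have ha := Finset.mem_filter.mp (hts (by simp : a ∈ ({a, b, c} : Finset (Fin 6))))
  have hb := Finset.mem_filter.mp (hts (by simp : b ∈ ({a, b, c} : Finset (Fin 6))))
  have hc := Finset.mem_filter.mp (hts (by simp : c ∈ ({a, b, c} : Finset (Fin 6))))
  exact ⟨j, a, b, c, ha.2.1, hb.2.1, hc.2.1, hab, hac, hbc, ha.2.2, hb.2.2, hc.2.2⟩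
end

section
/- Let T be a finite tree rooted at a vertex x, let v_1, v_2, …, v_k be the children of x, and for each 1 ≤ i ≤ k let l_i denote the rooted transitive number of v_i, with l_1 ≤ l_2 ≤ … ≤ l_k. Let z be the largest integer such that there exists a subsequence l_{i_1} ≤ l_{i_2} ≤ … ≤ l_{i_z} of (l_1, …, l_k) with l_{i_j} ≥ j for all 1 ≤ j ≤ z. Then the transitive number of x in T equals 1 + z. -/
variable {V : Type*}

/-- The set of vertices reachable from `v` by a walk avoiding `x`.  When `G` is a
tree rooted at `x` and `v` is a child of `x`, this is the vertex set of the
subtree rooted at `v`. -/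
def SubtreeAvoiding (G : SimpleGraph V) (x v : V) : Set V :=
  {u | ∃ w : G.Walk v u, x ∉ w.support}

/-- The transitive number of a vertex `v` with respect to the induced subgraph of `G`
on the vertex set `W`: the largest `p` such that some transitive partition
`{V_1, …, V_k}` of `W` has `v ∈ V_p`. -/
noncomputable def transNumOn (G : SimpleGraph V) (W : Set V) (v : V) : ℕ :=
  sSup {p | ∃ (k : ℕ) (P : Fin k → Set V), IsTransitivePartOn G W P ∧
    ∃ i : Fin k, (i : ℕ) + 1 = p ∧ v ∈ P i}

lemma partition_card_le [Fintype V] {W : Set V} {n : ℕ} {P : Fin n → Set V}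
    (h : IsPartitionOn W P) : n ≤ Fintype.card V := by
  obtain ⟨hne, hdisj, -⟩ := h
  choose f hf using hne
  have hinj : Function.Injective f := by
    intro i j hij
    by_contra hne'
    exact Set.disjoint_left.mp (hdisj hne') (hf i) (hij ▸ hf j)
  simpa using Fintype.card_le_of_injective f hinj

lemma transNum_bddAbove [Fintype V] (G : SimpleGraph V) (W : Set V) (u : V) :
    BddAbove {p | ∃ (k : ℕ) (P : Fin k → Set V), IsTransitivePartOn G W P ∧
      ∃ i : Fin k, (i : ℕ) + 1 = p ∧ u ∈ P i} := by
  refine ⟨Fintype.card V, fun p hp => ?_⟩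
  obtain ⟨k, P, hP, i, hi, -⟩ := hp
  have h1 := partition_card_le hP.1
  have h2 := i.isLt
  omega

lemma transNum_mem [Fintype V] {G : SimpleGraph V} {W : Set V} {u : V} {n : ℕ}
    (hn : 1 ≤ n) (h : n ≤ transNumOn G W u) :
    ∃ (m : ℕ) (P : Fin m → Set V), IsTransitivePartOn G W P ∧
      ∃ i : Fin m, n ≤ (i : ℕ) + 1 ∧ u ∈ P i := by
  classical
  set S := {p | ∃ (k : ℕ) (P : Fin k → Set V), IsTransitivePartOn G W P ∧
      ∃ i : Fin k, (i : ℕ) + 1 = p ∧ u ∈ P i} with hS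
  have hnonempty : S.Nonempty := by
    by_contra hemp
    rw [Set.not_nonempty_iff_eq_empty] at hemp
    have heq : transNumOn G W u = sSup S := rfl
    rw [heq, hemp, csSup_empty] at h
    simp at h; omega
  have hmem := Nat.sSup_mem hnonempty (transNum_bddAbove G W u)
  have heq : transNumOn G W u = sSup S := rfl
  rw [heq] at h
  obtain ⟨m, P, hP, i, hi, hu⟩ := hmem
  exact ⟨m, P, hP, i, by omega, hu⟩

lemma truncate {G : SimpleGraph V} {W : Set V} {m : ℕ} {P : Fin m → Set V}
    (hP : IsTransitivePartOn G W P) {u : V} {i : Fin m} (hu : u ∈ P i) {n : ℕ}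
    (hn1 : 1 ≤ n) (hni : n ≤ (i : ℕ) + 1) :
    ∃ Q : Fin n → Set V, IsTransitivePartOn G W Q ∧ u ∈ Q ⟨n - 1, by omega⟩ := by
  classical
  obtain ⟨⟨hne, hdisj, hcup⟩, hdom⟩ := hP
  have him := i.isLt
  set L : Set V := ⋃ (i' : Fin m) (_ : n - 1 ≤ (i' : ℕ)), P i' with hL
  refine ⟨fun j => if h : (j : ℕ) + 1 < n then P ⟨j, by omega⟩ else L, ⟨⟨?_, ?_, ?_⟩, ?_⟩, ?_⟩
  · intro j
    by_cases h : (j : ℕ) + 1 < n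
    · simpa [h] using hne ⟨j, by omega⟩
    · simp only [h, dif_neg, not_false_iff]
      exact ⟨u, Set.mem_biUnion (show n - 1 ≤ (i : ℕ) by omega) hu⟩
  · intro j j' hjj'
    have hne' : (j : ℕ) ≠ (j' : ℕ) := fun hh => hjj' (Fin.ext hh)
    by_cases h : (j : ℕ) + 1 < n <;> by_cases h' : (j' : ℕ) + 1 < n <;>
      simp only [h, h', dif_pos, dif_neg, not_false_iff]
    · exact hdisj (by simp only [ne_eq, Fin.mk.injEq]; omega)
    · rw [hL, Set.disjoint_iUnion_right]
      intro i'
      rw [Set.disjoint_iUnion_right]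
      intro hi'
      exact hdisj (by simp only [ne_eq, Fin.mk.injEq, Fin.ext_iff]; omega)
    · rw [hL, Set.disjoint_iUnion_left]
      intro i'
      rw [Set.disjoint_iUnion_left]
      intro hi'
      exact hdisj (by simp only [ne_eq, Fin.mk.injEq, Fin.ext_iff]; omega)
    · exfalso
      have h1 := j.isLt; have h2 := j'.isLt
      omega
  · apply Set.Subset.antisymm
    · intro w hw
      simp only [Set.mem_iUnion] at hw
      obtain ⟨j, hj⟩ := hw
      by_cases h : (j : ℕ) + 1 < n
      · rw [dif_pos h] at hj
        rw [← hcup]; exact Set.mem_iUnion.mpr ⟨_, hj⟩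
      · rw [dif_neg h] at hj
        simp only [hL, Set.mem_iUnion] at hj
        obtain ⟨i', -, hi'⟩ := hj
        rw [← hcup]; exact Set.mem_iUnion.mpr ⟨_, hi'⟩
    · intro w hw
      rw [← hcup] at hw
      obtain ⟨i', hi'⟩ := Set.mem_iUnion.mp hw
      by_cases h : (i' : ℕ) + 1 < n
      · refine Set.mem_iUnion.mpr ⟨⟨i', by omega⟩, ?_⟩
        rw [dif_pos (by simpa using h)]
        simpa using hi'
      · refine Set.mem_iUnion.mpr ⟨⟨n - 1, by omega⟩, ?_⟩
        rw [dif_neg (by simp; omega)]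
        exact Set.mem_biUnion (show n - 1 ≤ (i' : ℕ) by omega) hi'
  · intro j j' hjj' b hb
    have hlt : (j : ℕ) < (j' : ℕ) := hjj'
    have hj : (j : ℕ) + 1 < n := by
      have := j'.isLt; omega
    simp only at hb ⊢
    rw [dif_pos hj]
    by_cases h' : (j' : ℕ) + 1 < n
    · rw [dif_pos h'] at hb
      exact hdom _ _ (by simp only [Fin.mk_lt_mk]; omega) b hb
    · rw [dif_neg h'] at hb
      simp only [hL, Set.mem_iUnion] at hb
      obtain ⟨i', hi'1, hi'2⟩ := hb
      exact hdom _ _ (by simp only [Fin.mk_lt_mk, Fin.lt_def]; omega) b hi'2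
  · simp only
    rw [dif_neg (by simp; omega)]
    exact Set.mem_biUnion (show n - 1 ≤ (i : ℕ) by omega) hu

lemma subtree_self {G : SimpleGraph V} {x c : V} (h : c ≠ x) :
    c ∈ SubtreeAvoiding G x c :=
  ⟨SimpleGraph.Walk.nil, by simp [h.symm]⟩

lemma subtree_notMem_x {G : SimpleGraph V} {x c : V} :
    x ∉ SubtreeAvoiding G x c := by
  rintro ⟨w, hw⟩
  exact hw w.end_mem_support

lemma subtree_closed {G : SimpleGraph V} {x c u w : V} (hu : u ∈ SubtreeAvoiding G x c)
    (hadj : G.Adj u w) (hw : w ≠ x) : w ∈ SubtreeAvoiding G x c := by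
  obtain ⟨p, hp⟩ := hu
  refine ⟨p.concat hadj, ?_⟩
  rw [SimpleGraph.Walk.support_concat]
  simp only [List.concat_eq_append, List.mem_append, List.mem_singleton]
  rintro (h | h)
  · exact hp h
  · exact hw h.symm

lemma subtree_disjoint {G : SimpleGraph V} (hT : G.IsTree) {x c c' : V}
    (hc : G.Adj x c) (hc' : G.Adj x c') (hne : c ≠ c') :
    Disjoint (SubtreeAvoiding G x c) (SubtreeAvoiding G x c') := by
  classical
  rw [Set.disjoint_left]
  rintro u ⟨w1, hw1⟩ ⟨w2, hw2⟩
  apply hne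
  have h1 : x ∉ w1.bypass.support := fun h => hw1 (w1.support_bypass_subset h)
  have h2 : x ∉ w2.bypass.support := fun h => hw2 (w2.support_bypass_subset h)
  have p1 : (SimpleGraph.Walk.cons hc w1.bypass).IsPath :=
    (SimpleGraph.Walk.cons_isPath_iff _ _).mpr ⟨w1.bypass_isPath, h1⟩
  have p2 : (SimpleGraph.Walk.cons hc' w2.bypass).IsPath :=
    (SimpleGraph.Walk.cons_isPath_iff _ _).mpr ⟨w2.bypass_isPath, h2⟩
  obtain ⟨p, -, hp⟩ := hT.existsUnique_path x u
  have e1 := hp _ p1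
  have e2 := hp _ p2
  have := congrArg SimpleGraph.Walk.support (e1.trans e2.symm)
  rw [SimpleGraph.Walk.support_cons, SimpleGraph.Walk.support_cons,
    w1.bypass.support_eq_cons, w2.bypass.support_eq_cons] at this
  injection this with h3 h4
  injection h4

lemma child_transNum_ge [Fintype V] {G : SimpleGraph V} {m : ℕ} {Q : Fin m → Set V}
    (hQ : IsTransitivePartOn G Set.univ Q) {x c : V} (hc : G.Adj x c)
    {ip jc : Fin m} (hx : x ∈ Q ip) (hcQ : c ∈ Q jc) (hji : jc < ip) :
    (jc : ℕ) + 1 ≤ transNumOn G (SubtreeAvoiding G x c) c := by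
  classical
  obtain ⟨⟨hne, hdisj, hcup⟩, hdom⟩ := hQ
  set T : Set V := SubtreeAvoiding G x c with hT
  set j : ℕ := (jc : ℕ) with hj
  have hjm := jc.isLt
  have hjip : j < (ip : ℕ) := hji
  -- key: domination transfers into the subtree
  have key : ∀ (u : V) (s s' : Fin m), u ∈ T → u ∈ Q s' → (s : ℕ) < (s' : ℕ) → (s : ℕ) < j + 1 →
      ∃ w ∈ Q s ∩ T, G.Adj w u := by
    intro u s s' huT hus' hss' hsj
    obtain ⟨w, hwQ, hwadj⟩ := hdom s s' (Fin.lt_def.mpr hss') u hus'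
    have hwx : w ≠ x := by
      rintro rfl
      have : s ≠ ip := by
        intro hh; rw [hh] at hsj; omega
      exact Set.disjoint_left.mp (hdisj this) hwQ hx
    exact ⟨w, ⟨hwQ, subtree_closed huT hwadj.symm hwx⟩, hwadj⟩
  have hcT : c ∈ T := subtree_self hc.ne'
  -- the restricted partition
  set R : Fin (j + 1) → Set V := fun t =>
    if h : (t : ℕ) < j then Q ⟨t, by omega⟩ ∩ T
    else {u ∈ T | ∀ s : Fin m, (s : ℕ) < j → u ∉ Q s} with hR
  have hclast : c ∈ R ⟨j, by omega⟩ := by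
    rw [hR]
    simp only [lt_irrefl, dif_neg, not_false_iff, Set.mem_setOf_eq]
    exact ⟨hcT, fun s hs hcs => Set.disjoint_left.mp
      (hdisj (fun hh : s = jc => by rw [hh] at hs; omega)) hcs hcQ⟩
  have hRpart : IsTransitivePartOn G T R := by
    refine ⟨⟨?_, ?_, ?_⟩, ?_⟩
    · intro t
      by_cases h : (t : ℕ) < j
      · obtain ⟨w, hw, -⟩ := key c ⟨t, by omega⟩ jc hcT hcQ (by simp only [Fin.lt_def, Fin.val_mk]; omega) (by simp only [Fin.val_mk]; omega)
        exact ⟨w, by simp only [hR]; simpa [h] using hw⟩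
      · have htj : (t : ℕ) = j := by have := t.isLt; omega
        refine ⟨c, ?_⟩
        have ht2 : t = ⟨j, by omega⟩ := Fin.ext (by simp only [Fin.val_mk]; omega)
        rw [ht2]; exact hclast
    · intro t t' htt'
      have hvne : (t : ℕ) ≠ (t' : ℕ) := fun hh => htt' (Fin.ext hh)
      rw [hR]
      by_cases h : (t : ℕ) < j <;> by_cases h' : (t' : ℕ) < j <;>
        simp only [h, h', dif_pos, dif_neg, not_false_iff]
      · exact Set.disjoint_of_subset Set.inter_subset_left Set.inter_subset_left
          (hdisj (by simp only [ne_eq, Fin.mk.injEq]; omega))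
      · rw [Set.disjoint_left]
        rintro u ⟨hu1, -⟩ ⟨-, hu2⟩
        exact hu2 ⟨t, by omega⟩ h hu1
      · rw [Set.disjoint_left]
        rintro u ⟨-, hu2⟩ ⟨hu1, -⟩
        exact hu2 ⟨t', by omega⟩ h' hu1
      · exfalso; have := t.isLt; have := t'.isLt; omega
    · apply Set.Subset.antisymm
      · intro u hu
        obtain ⟨t, ht⟩ := Set.mem_iUnion.mp hu
        simp only [hR] at ht
        by_cases h : (t : ℕ) < j
        · rw [dif_pos h] at ht; exact ht.2
        · rw [dif_neg h] at ht; exact ht.1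
      · intro u huT
        by_cases h : ∃ s : Fin m, (s : ℕ) < j ∧ u ∈ Q s
        · obtain ⟨s, hs, hus⟩ := h
          refine Set.mem_iUnion.mpr ⟨⟨s, by omega⟩, ?_⟩
          rw [hR]
          simp only [hs, dif_pos]
          exact ⟨by simpa using hus, huT⟩
        · push_neg at h
          refine Set.mem_iUnion.mpr ⟨⟨j, by omega⟩, ?_⟩
          rw [hR]
          simp only [lt_irrefl, dif_neg, not_false_iff, Set.mem_setOf_eq]
          exact ⟨huT, h⟩
    · intro t t' htt' b hb
      have hlt : (t : ℕ) < (t' : ℕ) := htt'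
      have ht : (t : ℕ) < j := by have := t'.isLt; omega
      simp only [hR] at hb ⊢
      rw [dif_pos ht]
      by_cases h' : (t' : ℕ) < j
      · rw [dif_pos h'] at hb
        obtain ⟨w, hw, hwa⟩ := key b ⟨t, by omega⟩ ⟨t', by omega⟩ hb.2 hb.1
          (by simp only [Fin.lt_def, Fin.val_mk]; omega) (by simp only [Fin.val_mk]; omega)
        exact ⟨w, hw, hwa⟩
      · rw [dif_neg h'] at hb
        obtain ⟨hbT, hbs⟩ := hb
        have : b ∈ ⋃ s, Q s := by rw [hcup]; trivial
        obtain ⟨s, hbs'⟩ := Set.mem_iUnion.mp this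
        have hsj : j ≤ (s : ℕ) := by
          by_contra hh
          exact hbs s (by omega) hbs'
        obtain ⟨w, hw, hwa⟩ := key b ⟨t, by omega⟩ s hbT hbs'
          (by simp only [Fin.lt_def, Fin.val_mk]; omega) (by simp only [Fin.val_mk]; omega)
        exact ⟨w, hw, hwa⟩
  -- conclude via sSup
  apply le_csSup (transNum_bddAbove G T c)
  exact ⟨j + 1, R, hRpart, ⟨j, by omega⟩, rfl, hclast⟩

lemma lower_bound [Fintype V] {G : SimpleGraph V} (hT : G.IsTree) {x : V}
    {k z : ℕ} {v : Fin k → V} (hinj : Function.Injective v)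
    (hrange : Set.range v = G.neighborSet x)
    (idx : Fin z → Fin k) (hidx : StrictMono idx)
    (hlz : ∀ t : Fin z, (t : ℕ) + 1 ≤
      transNumOn G (SubtreeAvoiding G x (v (idx t))) (v (idx t))) :
    ∃ Q : Fin (z + 1) → Set V, IsTransitivePartOn G Set.univ Q ∧ x ∈ Q ⟨z, by omega⟩ := by
  classical
  set c : Fin z → V := fun t => v (idx t) with hcdef
  have hadj : ∀ t, G.Adj x (c t) := fun t =>
    (G.mem_neighborSet x (c t)).mp (hrange ▸ Set.mem_range_self _)
  have hcne : ∀ {t t' : Fin z}, t ≠ t' → c t ≠ c t' := fun h =>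
    fun hh => h (hidx.injective (hinj hh))
  have hPt : ∀ t : Fin z, ∃ P : Fin ((t : ℕ) + 1) → Set V,
      IsTransitivePartOn G (SubtreeAvoiding G x (c t)) P ∧ c t ∈ P ⟨(t : ℕ), by omega⟩ := by
    intro t
    obtain ⟨m, P0, hP0, i, hi, hmem⟩ := transNum_mem (by omega) (hlz t)
    obtain ⟨Q0, hQ0, hu⟩ := truncate hP0 hmem (show 1 ≤ (t : ℕ) + 1 by omega) (by omega)
    exact ⟨Q0, hQ0, hu⟩
  choose P hP hcP using hPt
  set A : Fin z → ℕ → Set V := fun t i => if h : i < (t : ℕ) + 1 then P t ⟨i, h⟩ else ∅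
    with hAdef
  set leftover : Set V := {u | u ≠ x ∧ ∀ t, u ∉ SubtreeAvoiding G x (c t)} with hLdef
  set Q : Fin (z + 1) → Set V := fun i =>
    (if (i : ℕ) = z then {x} else ∅) ∪ (⋃ t, A t (i : ℕ)) ∪
      (if (i : ℕ) = 0 then leftover else ∅) with hQdef
  have hAsub : ∀ t i, A t i ⊆ SubtreeAvoiding G x (c t) := by
    intro t i
    simp only [hAdef]
    by_cases h : i < (t : ℕ) + 1
    · rw [dif_pos h]
      rw [← (hP t).1.2.2]
      exact Set.subset_iUnion _ _
    · rw [dif_neg h]; exact Set.empty_subset _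
  have hxA : ∀ t i, x ∉ A t i := fun t i h => subtree_notMem_x (hAsub t i h)
  have hmemQ : ∀ (i : Fin (z + 1)) (u : V), u ∈ Q i ↔
      (((i : ℕ) = z ∧ u = x) ∨ (∃ t, u ∈ A t (i : ℕ)) ∨ ((i : ℕ) = 0 ∧ u ∈ leftover)) := by
    intro i u
    rw [hQdef]
    by_cases h1 : (i : ℕ) = z <;> by_cases h2 : (i : ℕ) = 0 <;>
      simp [h1, h2, Set.mem_union, Set.mem_iUnion] <;> tauto
  have hxQ : x ∈ Q ⟨z, by omega⟩ := by
    rw [hmemQ]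
    exact Or.inl ⟨rfl, rfl⟩
  refine ⟨Q, ⟨⟨?_, ?_, ?_⟩, ?_⟩, hxQ⟩
  · intro i
    by_cases hiz : (i : ℕ) = z
    · exact ⟨x, (hmemQ i x).mpr (Or.inl ⟨hiz, rfl⟩)⟩
    · have hilt : (i : ℕ) < z := by have := i.isLt; omega
      obtain ⟨w, hw⟩ := (hP ⟨i, hilt⟩).1.1 ⟨(i : ℕ), by simp⟩
      refine ⟨w, (hmemQ i w).mpr (Or.inr (Or.inl ⟨⟨i, hilt⟩, ?_⟩))⟩
      simp only [hAdef]
      simpa using hw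
  · have hQd : ∀ i i' : Fin (z + 1), (i : ℕ) < (i' : ℕ) → Disjoint (Q i) (Q i') := by
      intro i i' hii'
      rw [Set.disjoint_left]
      intro u hu hu'
      rw [hmemQ] at hu hu'
      have hi'0 : (i' : ℕ) ≠ 0 := by omega
      rcases hu' with ⟨hiz', rfl⟩ | ⟨t', ht'⟩ | ⟨h0, -⟩
      · rcases hu with ⟨hiz, -⟩ | ⟨t, ht⟩ | ⟨-, huL⟩
        · omega
        · exact hxA t _ ht
        · rw [hLdef] at huL; exact huL.1 rfl
      · rcases hu with ⟨hiz, rfl⟩ | ⟨t, ht⟩ | ⟨-, huL⟩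
        · exact hxA t' _ ht'
        · by_cases htt : t = t'
          · subst htt
            have hi : (i : ℕ) < (t : ℕ) + 1 := by
              by_contra hh
              simp only [hAdef, dif_neg hh] at ht
              exact Set.notMem_empty _ ht
            have hi2 : (i' : ℕ) < (t : ℕ) + 1 := by
              by_contra hh
              simp only [hAdef, dif_neg hh] at ht'
              exact Set.notMem_empty _ ht'
            simp only [hAdef, dif_pos hi] at ht
            simp only [hAdef, dif_pos hi2] at ht'
            exact Set.disjoint_left.mp
              ((hP t).1.2.1 (by simp only [ne_eq, Fin.mk.injEq]; omega)) ht ht'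
          · exact Set.disjoint_left.mp
              (subtree_disjoint hT (hadj t) (hadj t') (hcne htt))
              (hAsub t _ ht) (hAsub t' _ ht')
        · rw [hLdef] at huL
          exact huL.2 t' (hAsub t' _ ht')
      · omega
    intro i i' hii'
    rcases Nat.lt_trichotomy (i : ℕ) (i' : ℕ) with h | h | h
    · exact hQd i i' h
    · exact absurd (Fin.ext h) hii'
    · exact (hQd i' i h).symm
  · apply Set.Subset.antisymm (Set.subset_univ _)
    intro u _
    by_cases hux : u = x
    · subst hux
      exact Set.mem_iUnion.mpr ⟨⟨z, by omega⟩, hxQ⟩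
    by_cases hsub : ∃ t, u ∈ SubtreeAvoiding G x (c t)
    · obtain ⟨t, ht⟩ := hsub
      rw [← (hP t).1.2.2] at ht
      obtain ⟨s, hs⟩ := Set.mem_iUnion.mp ht
      have hsz : (s : ℕ) < z + 1 := by have := s.isLt; have := t.isLt; omega
      refine Set.mem_iUnion.mpr ⟨⟨(s : ℕ), hsz⟩, (hmemQ _ u).mpr (Or.inr (Or.inl ⟨t, ?_⟩))⟩
      simp only [hAdef]
      rw [dif_pos s.isLt]
      simpa using hs
    · push_neg at hsub
      refine Set.mem_iUnion.mpr ⟨⟨0, by omega⟩, (hmemQ _ u).mpr (Or.inr (Or.inr ⟨rfl, ?_⟩))⟩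
      rw [hLdef]
      exact ⟨hux, hsub⟩
  · intro i i' hii' b hb
    have hlt : (i : ℕ) < (i' : ℕ) := hii'
    rw [hmemQ] at hb
    rcases hb with ⟨hiz', rfl⟩ | ⟨t, ht⟩ | ⟨h0, -⟩
    · -- b = x : use the child c ⟨i⟩
      have hiz : (i : ℕ) < z := by omega
      set t0 : Fin z := ⟨(i : ℕ), hiz⟩ with ht0
      refine ⟨c t0, (hmemQ i (c t0)).mpr (Or.inr (Or.inl ⟨t0, ?_⟩)), (hadj t0).symm⟩
      simp only [hAdef]
      rw [dif_pos (by simp [ht0])]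
      convert hcP t0 using 2
    · have hi' : (i' : ℕ) < (t : ℕ) + 1 := by
        by_contra hh
        simp only [hAdef, dif_neg hh] at ht
        exact Set.notMem_empty _ ht
      simp only [hAdef, dif_pos hi'] at ht
      obtain ⟨a, ha, haadj⟩ := (hP t).2 ⟨(i : ℕ), by omega⟩ ⟨(i' : ℕ), hi'⟩
        (by simp only [Fin.mk_lt_mk]; omega) b ht
      refine ⟨a, (hmemQ i a).mpr (Or.inr (Or.inl ⟨t, ?_⟩)), haadj⟩
      simp only [hAdef]
      rw [dif_pos (show (i : ℕ) < (t : ℕ) + 1 by omega)]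
      exact ha
    · omega

lemma upper_bound [Fintype V] {G : SimpleGraph V} {x : V} {k : ℕ} {v : Fin k → V}
    (hinj : Function.Injective v) (hrange : Set.range v = G.neighborSet x)
    {l : Fin k → ℕ} (hl : ∀ i, l i = transNumOn G (SubtreeAvoiding G x (v i)) (v i))
    (hmono : Monotone l)
    {m : ℕ} {Q : Fin m → Set V} (hQ : IsTransitivePartOn G Set.univ Q)
    {i : Fin m} (hx : x ∈ Q i) :
    ∃ f : Fin (i : ℕ) → Fin k, StrictMono f ∧ ∀ t : Fin (i : ℕ), (t : ℕ) + 1 ≤ l (f t) := by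
  classical
  have him := i.isLt
  have hg : ∀ j : Fin (i : ℕ), ∃ gi : Fin k,
      v gi ∈ Q ⟨(j : ℕ), lt_trans j.isLt i.isLt⟩ := by
    intro j
    obtain ⟨a, ha, haadj⟩ := hQ.2 ⟨(j : ℕ), lt_trans j.isLt i.isLt⟩ i
      (by rw [Fin.lt_def]; exact j.isLt) x hx
    have hmem : a ∈ Set.range v := by
      rw [hrange]
      exact (G.mem_neighborSet x a).mpr haadj.symm
    obtain ⟨gi, rfl⟩ := hmem
    exact ⟨gi, ha⟩
  choose g hg using hg
  have ginj : Function.Injective g := by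
    intro j j' hjj'
    by_contra hne
    have h1 := hg j
    have h2 := hg j'
    rw [hjj'] at h1
    exact Set.disjoint_left.mp
      (hQ.1.2.1 (by simp only [ne_eq, Fin.mk.injEq]; exact fun hh => hne (Fin.ext hh))) h1 h2
  have hlg : ∀ j : Fin (i : ℕ), (j : ℕ) + 1 ≤ l (g j) := by
    intro j
    rw [hl]
    have hadj : G.Adj x (v (g j)) :=
      (G.mem_neighborSet x (v (g j))).mp (hrange ▸ Set.mem_range_self _)
    exact child_transNum_ge hQ hadj hx (hg j) (by rw [Fin.lt_def]; exact j.isLt)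
  set S' : Finset (Fin k) := Finset.image g Finset.univ with hS'
  have hcard : S'.card = (i : ℕ) := by
    rw [hS', Finset.card_image_of_injective _ ginj, Finset.card_univ, Fintype.card_fin]
  set f := S'.orderEmbOfFin hcard with hf
  refine ⟨f, f.strictMono, ?_⟩
  intro t
  by_contra hcon
  push_neg at hcon
  have hmap : ∀ t' : Fin ((t : ℕ) + 1), ∃ j : Fin (i : ℕ), (j : ℕ) < (t : ℕ) ∧
      g j = f ⟨(t' : ℕ), by have := t'.isLt; have := t.isLt; omega⟩ := by
    intro t'
    have hmem : f ⟨(t' : ℕ), by have := t'.isLt; have := t.isLt; omega⟩ ∈ S' :=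
      Finset.orderEmbOfFin_mem S' hcard _
    obtain ⟨j, -, hj⟩ := Finset.mem_image.mp hmem
    refine ⟨j, ?_, hj⟩
    have h1 : f ⟨(t' : ℕ), by have := t'.isLt; have := t.isLt; omega⟩ ≤ f t :=
      f.monotone (by rw [Fin.le_def]; simp; omega)
    have h2 : l (g j) ≤ (t : ℕ) := by
      rw [hj]
      exact le_trans (hmono h1) (by omega)
    have h3 := hlg j
    omega
  choose φ hφ1 hφ2 using hmap
  have hcard2 := Fintype.card_le_of_injective
    (fun t' : Fin ((t : ℕ) + 1) => (⟨(φ t' : ℕ), hφ1 t'⟩ : Fin (t : ℕ))) ?_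
  · simp only [Fintype.card_fin] at hcard2
    omega
  · intro t1 t2 h12
    have hv : φ t1 = φ t2 := Fin.ext (by simpa [Fin.ext_iff] using h12)
    have he : f ⟨(t1 : ℕ), by have := t1.isLt; have := t.isLt; omega⟩ =
        f ⟨(t2 : ℕ), by have := t2.isLt; have := t.isLt; omega⟩ := by
      rw [← hφ2 t1, ← hφ2 t2, hv]
    have := f.injective he
    exact Fin.ext (by simpa [Fin.ext_iff] using this)

/-- In a finite tree `T` rooted at `x` with children `v₁, …, v_k` having
rooted transitive numbers `l₁ ≤ … ≤ l_k`, if `z` is the largest integer admitting a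
subsequence `l_{i₁} ≤ … ≤ l_{i_z}` with `l_{i_j} ≥ j`, then `t(x, T) = 1 + z`. -/
theorem tree_transNum_root [Fintype V] (G : SimpleGraph V) (hT : G.IsTree) (x : V)
    (k : ℕ) (v : Fin k → V) (hinj : Function.Injective v)
    (hrange : Set.range v = G.neighborSet x)
    (l : Fin k → ℕ)
    (hl : ∀ i, l i = transNumOn G (SubtreeAvoiding G x (v i)) (v i))
    (hmono : Monotone l)
    (z : ℕ)
    (hz : ∃ idx : Fin z → Fin k, StrictMono idx ∧ ∀ t : Fin z, (t : ℕ) + 1 ≤ l (idx t))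
    (hzmax : ∀ m : ℕ,
      (∃ f : Fin m → Fin k, StrictMono f ∧ ∀ t : Fin m, (t : ℕ) + 1 ≤ l (f t)) → m ≤ z) :
    transNumOn G Set.univ x = 1 + z := by
  
  obtain ⟨idx, hidx, hzl⟩ := hz
  have hlz : ∀ t : Fin z, (t : ℕ) + 1 ≤
      transNumOn G (SubtreeAvoiding G x (v (idx t))) (v (idx t)) := by
    intro t
    rw [← hl]
    exact hzl t
  obtain ⟨Q, hQ, hxQ⟩ := lower_bound hT hinj hrange idx hidx hlz
  have hmem : z + 1 ∈ {p | ∃ (k : ℕ) (P : Fin k → Set V), IsTransitivePartOn G Set.univ P ∧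
      ∃ i : Fin k, (i : ℕ) + 1 = p ∧ x ∈ P i} :=
    ⟨z + 1, Q, hQ, ⟨z, by omega⟩, by simp, hxQ⟩
  have hub : ∀ p ∈ {p | ∃ (k : ℕ) (P : Fin k → Set V), IsTransitivePartOn G Set.univ P ∧
      ∃ i : Fin k, (i : ℕ) + 1 = p ∧ x ∈ P i}, p ≤ z + 1 := by
    rintro p ⟨m, Q', hQ', i, hip, hx'⟩
    obtain ⟨f, hf, hfl⟩ := upper_bound hinj hrange hl hmono hQ' hx'
    have := hzmax (i : ℕ) ⟨f, hf, hfl⟩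
    omega
  have heq : transNumOn G Set.univ x = z + 1 :=
    le_antisymm (csSup_le ⟨z + 1, hmem⟩ hub)
      (le_csSup (transNum_bddAbove G Set.univ x) hmem)
  omega
end
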